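/- arXiv:1409.0707 — 9 statements merged into one kernel-verified Lean document; each statement's English description precedes it below -/
import Mathlib

section
/- For ν ∈ ℝ, the modified Bessel function K_ν(t) = ∫_0^∞ e^{-t cosh z} cosh(ν z) dz satisfies the modified Bessel differential equation: t² K_ν''(t) + t K_ν'(t) − (t² + ν²) K_ν(t) = 0 for all t > 0. -/
/-!
Differentiating under the integral sign, with the domination
`cosh z ^ n * e^{-t cosh z} * cosh (ν z) ≤ e^{(n + |ν|) z - t cosh z}`, gives
`K_ν' = -∫ cosh z · f` and `K_ν'' = ∫ cosh² z · f` for `f z = e^{-t cosh z} cosh (ν z)`.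
Since `cosh² = sinh² + 1`, the Bessel combination of the integrands is the `z`-derivative of
`-e^{-t cosh z} (t sinh z cosh (ν z) + ν sinh (ν z))`, which vanishes at `z = 0` and as `z → ∞`.
-/

open MeasureTheory Real

/-- The modified Bessel function `K_ν(t) = ∫_0^∞ e^{-t cosh z} cosh(ν z) dz`. -/
noncomputable def besselK (ν : ℝ) (t : ℝ) : ℝ :=
  ∫ z in Set.Ioi (0 : ℝ), Real.exp (-t * Real.cosh z) * Real.cosh (ν * z)

open Set Filter Topology Asymptotics

lemma cosh_le_exp_abs (x : ℝ) : cosh x ≤ exp |x| := by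
  rw [← cosh_abs, cosh_eq]
  linarith [exp_le_exp.2 (show -|x| ≤ |x| by linarith [abs_nonneg x])]

lemma abs_sinh_le_exp_abs (x : ℝ) : |sinh x| ≤ exp |x| :=
  (abs_sinh x ▸ (sinh_lt_cosh |x|).le).trans ((cosh_abs x).symm ▸ cosh_le_exp_abs x)

lemma sq_div_four_le_cosh (x : ℝ) : x ^ 2 / 4 ≤ cosh x := by
  have h := quadratic_le_exp_of_nonneg (abs_nonneg x)
  rw [sq_abs] at h
  rw [← cosh_abs, cosh_eq]
  linarith [exp_pos (-|x|), abs_nonneg x]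

lemma tendsto_exp_mul_sub_mul_cosh_atTop {t : ℝ} (ht : 0 < t) (c : ℝ) :
    Tendsto (fun z => exp (c * z - t * cosh z)) atTop (𝓝 0) := by
  have hquad : Tendsto (fun z : ℝ => z * (c - t / 4 * z)) atTop atBot :=
    tendsto_id.atTop_mul_atBot₀ (tendsto_atBot_add_const_left _ c
      (tendsto_id.const_mul_atTop_of_neg (show -(t / 4) < 0 by linarith)) |>.congr fun z => by
        simp only [id]; ring)
  refine tendsto_exp_atBot.comp (tendsto_atBot_mono (fun z => ?_) hquad)
  nlinarith [sq_div_four_le_cosh z]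

lemma integrableOn_exp_mul_sub_mul_cosh {t : ℝ} (ht : 0 < t) (c : ℝ) :
    IntegrableOn (fun z => exp (c * z - t * cosh z)) (Ioi 0) := by
  refine integrable_of_isBigO_exp_neg one_pos (by fun_prop) (IsLittleO.isBigO ?_)
  rw [isLittleO_iff_tendsto fun z hz => absurd hz (exp_ne_zero _)]
  refine (tendsto_exp_mul_sub_mul_cosh_atTop ht (c + 1)).congr fun z => ?_
  rw [← exp_sub]
  ring_nf

noncomputable def besselKMoment (ν : ℝ) (n : ℕ) (t : ℝ) : ℝ :=
  ∫ z in Ioi 0, cosh z ^ n * (exp (-t * cosh z) * cosh (ν * z))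

lemma besselK_eq_besselKMoment_zero (ν : ℝ) : besselK ν = besselKMoment ν 0 := by
  ext t
  simp [besselK, besselKMoment]

lemma abs_cosh_pow_mul_exp_mul_cosh_le (ν t : ℝ) (n : ℕ) {z : ℝ} (hz : 0 ≤ z) :
    |cosh z ^ n * (exp (-t * cosh z) * cosh (ν * z))| ≤ exp ((n + |ν|) * z - t * cosh z) := by
  have hcosh : cosh z ^ n ≤ exp z ^ n :=
    pow_le_pow_left₀ (cosh_pos z).le (by simpa [abs_of_nonneg hz] using cosh_le_exp_abs z) n
  have hcosh_mul : cosh (ν * z) ≤ exp (|ν| * z) := by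
    simpa [abs_mul, abs_of_nonneg hz] using cosh_le_exp_abs (ν * z)
  rw [abs_of_nonneg (by positivity)]
  calc cosh z ^ n * (exp (-t * cosh z) * cosh (ν * z))
      ≤ exp z ^ n * (exp (-t * cosh z) * exp (|ν| * z)) := by gcongr
    _ = exp ((n + |ν|) * z - t * cosh z) := by
      rw [← exp_nat_mul, ← exp_add, ← exp_add]
      ring_nf

lemma integrableOn_cosh_pow_mul_exp_mul_cosh (ν : ℝ) {t : ℝ} (ht : 0 < t) (n : ℕ) :
    IntegrableOn (fun z => cosh z ^ n * (exp (-t * cosh z) * cosh (ν * z))) (Ioi 0) :=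
  (integrableOn_exp_mul_sub_mul_cosh ht (n + |ν|)).mono' (by fun_prop) <|
    (ae_restrict_iff' measurableSet_Ioi).2 <| ae_of_all _ fun _ hz =>
      abs_cosh_pow_mul_exp_mul_cosh_le ν t n (le_of_lt hz)

lemma hasDerivAt_besselKMoment (ν : ℝ) (n : ℕ) {t : ℝ} (ht : 0 < t) :
    HasDerivAt (besselKMoment ν n) (-besselKMoment ν (n + 1) t) t := by
  have hmem : ∀ x ∈ Metric.ball t (t / 2), t / 2 ≤ x := fun x hx => by
    have := abs_lt.mp (Real.dist_eq x t ▸ Metric.mem_ball.mp hx)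
    linarith
  have h := hasDerivAt_integral_of_dominated_loc_of_deriv_le
    (F := fun x z => cosh z ^ n * (exp (-x * cosh z) * cosh (ν * z)))
    (F' := fun x z => -(cosh z ^ (n + 1) * (exp (-x * cosh z) * cosh (ν * z))))
    (μ := volume.restrict (Ioi 0))
    (bound := fun z => cosh z ^ (n + 1) * (exp (-(t / 2) * cosh z) * cosh (ν * z)))
    (Metric.ball_mem_nhds t (half_pos ht))
    (Eventually.of_forall fun x => by fun_prop)
    (integrableOn_cosh_pow_mul_exp_mul_cosh ν ht n)
    (by fun_prop)
    (ae_of_all _ fun z x hx => ?_)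
    (integrableOn_cosh_pow_mul_exp_mul_cosh ν (half_pos ht) (n + 1))
    (ae_of_all _ fun z x _ => ?_)
  · simp only [integral_neg] at h
    exact h.2
  · have hx := hmem x hx
    rw [norm_neg, Real.norm_eq_abs, abs_of_nonneg (by positivity)]
    gcongr
  · have hexp : HasDerivAt (fun x => exp (-x * cosh z)) (exp (-x * cosh z) * -cosh z) x :=
      ((hasDerivAt_neg x).mul_const (cosh z)).exp |>.congr_deriv (by ring)
    exact ((hexp.mul_const (cosh (ν * z))).const_mul (cosh z ^ n)).congr_deriv (by ring)

lemma deriv_besselK (ν : ℝ) {t : ℝ} (ht : 0 < t) : deriv (besselK ν) t = -besselKMoment ν 1 t := by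
  rw [besselK_eq_besselKMoment_zero]
  exact (hasDerivAt_besselKMoment ν 0 ht).deriv

lemma deriv_deriv_besselK (ν : ℝ) {t : ℝ} (ht : 0 < t) :
    deriv (deriv (besselK ν)) t = besselKMoment ν 2 t := by
  have hderiv : deriv (besselK ν) =ᶠ[𝓝 t] -besselKMoment ν 1 :=
    eventually_of_mem (Ioi_mem_nhds ht) fun s hs => deriv_besselK ν hs
  rw [hderiv.deriv_eq, (hasDerivAt_besselKMoment ν 1 ht).neg.deriv, neg_neg]

noncomputable def besselKPrimitive (ν t z : ℝ) : ℝ :=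
  -(exp (-t * cosh z) * (t * sinh z * cosh (ν * z) + ν * sinh (ν * z)))

lemma hasDerivAt_besselKPrimitive (ν t z : ℝ) :
    HasDerivAt (besselKPrimitive ν t)
      (exp (-t * cosh z) * ((t ^ 2 * sinh z ^ 2 - t * cosh z - ν ^ 2) * cosh (ν * z))) z := by
  have hexp : HasDerivAt (fun z => exp (-t * cosh z)) (exp (-t * cosh z) * (-t * sinh z)) z :=
    ((hasDerivAt_cosh z).const_mul (-t)).exp
  have hcosh : HasDerivAt (fun z => cosh (ν * z)) (sinh (ν * z) * ν) z :=
    (hasDerivAt_cosh _).comp z ((hasDerivAt_id z).const_mul ν |>.congr_deriv (mul_one ν))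
  have hsinh : HasDerivAt (fun z => sinh (ν * z)) (cosh (ν * z) * ν) z :=
    (hasDerivAt_sinh _).comp z ((hasDerivAt_id z).const_mul ν |>.congr_deriv (mul_one ν))
  refine (hexp.mul ((((hasDerivAt_sinh z).const_mul t).mul hcosh).add
    (hsinh.const_mul ν))).neg.congr_deriv ?_
  simp only [Pi.add_apply, Pi.mul_apply]
  ring

lemma tendsto_besselKPrimitive_atTop (ν : ℝ) {t : ℝ} (ht : 0 < t) :
    Tendsto (besselKPrimitive ν t) atTop (𝓝 0) := by
  refine squeeze_zero_norm' ?_ (by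
    simpa using (tendsto_exp_mul_sub_mul_cosh_atTop ht (1 + |ν|)).const_mul (t + |ν|))
  filter_upwards [eventually_ge_atTop 0] with z hz
  have hsinh : |sinh z| ≤ exp z := by simpa [abs_of_nonneg hz] using abs_sinh_le_exp_abs z
  have hcosh_mul : cosh (ν * z) ≤ exp (|ν| * z) := by
    simpa [abs_mul, abs_of_nonneg hz] using cosh_le_exp_abs (ν * z)
  have hsinh_mul : |sinh (ν * z)| ≤ exp (|ν| * z) := by
    simpa [abs_mul, abs_of_nonneg hz] using abs_sinh_le_exp_abs (ν * z)
  have hexp : exp (|ν| * z) ≤ exp z * exp (|ν| * z) :=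
    le_mul_of_one_le_left (exp_nonneg _) (one_le_exp hz)
  have hsum : |t * sinh z * cosh (ν * z) + ν * sinh (ν * z)|
      ≤ (t + |ν|) * (exp z * exp (|ν| * z)) := by
    rw [add_mul]
    refine (abs_add_le _ _).trans (add_le_add ?_ ?_)
    · rw [abs_mul, abs_mul, abs_of_pos ht, abs_of_pos (cosh_pos _), mul_assoc]
      gcongr
    · rw [abs_mul]
      gcongr
      exact hsinh_mul.trans hexp
  rw [besselKPrimitive, norm_neg, norm_mul, Real.norm_eq_abs, Real.norm_eq_abs, abs_of_pos (exp_pos _)]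
  calc exp (-t * cosh z) * |t * sinh z * cosh (ν * z) + ν * sinh (ν * z)|
      ≤ exp (-t * cosh z) * ((t + |ν|) * (exp z * exp (|ν| * z))) := by gcongr
    _ = (t + |ν|) * exp ((1 + |ν|) * z - t * cosh z) := by
      rw [← exp_add, mul_left_comm, ← exp_add]
      congr 2
      ring

lemma besselKMoment_combination_eq_zero (ν : ℝ) {t : ℝ} (ht : 0 < t) :
    t ^ 2 * besselKMoment ν 2 t - t * besselKMoment ν 1 t
      - (t ^ 2 + ν ^ 2) * besselKMoment ν 0 t = 0 := by
  set f : ℕ → ℝ → ℝ := fun n z => cosh z ^ n * (exp (-t * cosh z) * cosh (ν * z))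
  have hf : ∀ n, IntegrableOn (f n) (Ioi 0) := integrableOn_cosh_pow_mul_exp_mul_cosh ν ht
  have hint₂₁ := ((hf 2).const_mul (t ^ 2)).sub' ((hf 1).const_mul t)
  have hint := hint₂₁.sub' ((hf 0).const_mul (t ^ 2 + ν ^ 2))
  have hcomb : t ^ 2 * besselKMoment ν 2 t - t * besselKMoment ν 1 t
      - (t ^ 2 + ν ^ 2) * besselKMoment ν 0 t
      = ∫ z in Ioi 0, t ^ 2 * f 2 z - t * f 1 z - (t ^ 2 + ν ^ 2) * f 0 z := by
    rw [integral_sub hint₂₁ ((hf 0).const_mul _),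
      integral_sub ((hf 2).const_mul _) ((hf 1).const_mul _),
      integral_const_mul, integral_const_mul, integral_const_mul]
    rfl
  have hintegrand : (fun z => t ^ 2 * f 2 z - t * f 1 z - (t ^ 2 + ν ^ 2) * f 0 z)
      = fun z => exp (-t * cosh z) * ((t ^ 2 * sinh z ^ 2 - t * cosh z - ν ^ 2) * cosh (ν * z)) := by
    ext z
    simp only [f, sinh_sq]
    ring
  rw [hcomb, hintegrand, integral_Ioi_of_hasDerivAt_of_tendsto'
    (fun z _ => hasDerivAt_besselKPrimitive ν t z) (hintegrand ▸ hint)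
    (tendsto_besselKPrimitive_atTop ν ht)]
  simp [besselKPrimitive]

theorem stmt0 (ν : ℝ) :
    ∀ t : ℝ, 0 < t →
      t ^ 2 * deriv (deriv (besselK ν)) t + t * deriv (besselK ν) t
        - (t ^ 2 + ν ^ 2) * besselK ν t = 0 := by
  intro t ht
  rw [deriv_deriv_besselK ν ht, deriv_besselK ν ht, besselK_eq_besselKMoment_zero]
  linarith [besselKMoment_combination_eq_zero ν ht]
end

section
/- For ν ∈ ℝ, the modified Bessel function K_ν(t) = ∫_0^∞ e^{-t cosh z} cosh(ν z) dz tends to 0 as t → +∞. -/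
set_option linter.unnecessarySeqFocus false

open MeasureTheory Real

lemma quad_le_cosh (z : ℝ) : 1 + z ^ 2 / 2 ≤ Real.cosh z := by
  have h1 : Real.cosh (2 * (z / 2)) = Real.cosh (z / 2) ^ 2 + Real.sinh (z / 2) ^ 2 :=
    Real.cosh_two_mul _
  rw [show (2:ℝ) * (z / 2) = z by ring] at h1
  have h2 : Real.cosh (z / 2) ^ 2 = Real.sinh (z / 2) ^ 2 + 1 := Real.cosh_sq _
  have h3 : |z / 2| ≤ Real.sinh |z / 2| := (Real.self_le_sinh_iff).mpr (abs_nonneg _)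
  have h4 : Real.sinh (z / 2) ^ 2 = Real.sinh |z / 2| ^ 2 := by
    rcases abs_choice (z / 2) with h | h <;> rw [h] <;> simp [Real.sinh_neg]
  have h5 : (z / 2) ^ 2 ≤ Real.sinh |z / 2| ^ 2 := by
    have := abs_nonneg (z / 2)
    nlinarith [sq_abs (z / 2)]
  nlinarith [h1, h2]

lemma cosh_le_exp_abs_s1 (x : ℝ) : Real.cosh x ≤ Real.exp |x| := by
  rw [Real.cosh_eq]
  have h1 : Real.exp x ≤ Real.exp |x| := Real.exp_le_exp.mpr (le_abs_self x)
  have h2 : Real.exp (-x) ≤ Real.exp |x| := Real.exp_le_exp.mpr (neg_le_abs x)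
  linarith

theorem stmt1 (ν : ℝ) :
    Filter.Tendsto (besselK ν) Filter.atTop (nhds 0) := by
  -- dominating function for t = 1
  set h : ℝ → ℝ := fun z => Real.exp (-1 * Real.cosh z) * Real.cosh (ν * z) with hh
  have hnonneg : ∀ t z : ℝ, 0 ≤ Real.exp (-t * Real.cosh z) * Real.cosh (ν * z) :=
    fun t z => mul_nonneg (Real.exp_pos _).le (Real.cosh_pos _).le
  -- Gaussian dominating function
  have hgauss : Integrable (fun z : ℝ =>
      Real.exp (ν ^ 2 / 2 - 1) * Real.exp (-(1 / 2) * (z - |ν|) ^ 2)) := by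
    exact ((integrable_exp_neg_mul_sq (by norm_num : (0:ℝ) < 1/2)).comp_sub_right |ν|).const_mul _
  have hbound : ∀ z : ℝ, 0 < z →
      h z ≤ Real.exp (ν ^ 2 / 2 - 1) * Real.exp (-(1 / 2) * (z - |ν|) ^ 2) := by
    intro z hz
    have h1 : Real.cosh (ν * z) ≤ Real.exp (|ν| * z) := by
      have := cosh_le_exp_abs_s1 (ν * z)
      rwa [abs_mul, abs_of_pos hz] at this
    have h2 : 1 + z ^ 2 / 2 ≤ Real.cosh z := quad_le_cosh z
    calc h z ≤ Real.exp (-1 * Real.cosh z) * Real.exp (|ν| * z) :=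
          mul_le_mul_of_nonneg_left h1 (Real.exp_pos _).le
      _ = Real.exp (|ν| * z - Real.cosh z) := by rw [← Real.exp_add]; ring_nf
      _ ≤ Real.exp (ν ^ 2 / 2 - 1 + (-(1 / 2) * (z - |ν|) ^ 2)) := by
          apply Real.exp_le_exp.mpr
          have : |ν| ^ 2 = ν ^ 2 := sq_abs ν
          nlinarith
      _ = _ := by rw [Real.exp_add]
  have hmeas : ∀ t : ℝ, AEStronglyMeasurable
      (fun z => Real.exp (-t * Real.cosh z) * Real.cosh (ν * z))
      (volume.restrict (Set.Ioi (0:ℝ))) := by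
    intro t
    exact (((Real.continuous_exp.comp ((continuous_const.mul Real.continuous_cosh))).mul
      (Real.continuous_cosh.comp (continuous_const.mul continuous_id))).aestronglyMeasurable).restrict
  have hint : IntegrableOn h (Set.Ioi (0:ℝ)) := by
    refine Integrable.mono' (hgauss.restrict) (hmeas 1) ?_
    filter_upwards [ae_restrict_mem measurableSet_Ioi] with z hz
    rw [Real.norm_of_nonneg (hnonneg 1 z)]
    exact hbound z hz
  set C : ℝ := ∫ z in Set.Ioi (0:ℝ), h z with hC
  have hupper : ∀ t : ℝ, 1 ≤ t → besselK ν t ≤ Real.exp (1 - t) * C := by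
    intro t ht
    have : besselK ν t ≤ ∫ z in Set.Ioi (0:ℝ), Real.exp (1 - t) * h z := by
      apply integral_mono_of_nonneg
      · exact Filter.Eventually.of_forall fun z => hnonneg t z
      · exact hint.const_mul _
      · filter_upwards [ae_restrict_mem measurableSet_Ioi] with z _
        have hc : 1 ≤ Real.cosh z := Real.one_le_cosh z
        have : Real.exp (-t * Real.cosh z) ≤ Real.exp (1 - t) * Real.exp (-1 * Real.cosh z) := by
          rw [← Real.exp_add]
          apply Real.exp_le_exp.mpr
          nlinarith
        calc Real.exp (-t * Real.cosh z) * Real.cosh (ν * z)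
            ≤ (Real.exp (1 - t) * Real.exp (-1 * Real.cosh z)) * Real.cosh (ν * z) :=
              mul_le_mul_of_nonneg_right this (Real.cosh_pos _).le
          _ = Real.exp (1 - t) * h z := by ring
    rwa [integral_const_mul] at this
  have hlow : ∀ t : ℝ, 0 ≤ besselK ν t := fun t =>
    integral_nonneg fun z => hnonneg t z
  have htend : Filter.Tendsto (fun t : ℝ => Real.exp (1 - t) * C) Filter.atTop (nhds 0) := by
    have : Filter.Tendsto (fun t : ℝ => Real.exp (1 - t)) Filter.atTop (nhds 0) := by
      have := Real.tendsto_exp_neg_atTop_nhds_zero.const_mul (Real.exp 1)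
      rw [mul_zero] at this
      refine this.congr fun t => ?_
      rw [← Real.exp_add]; ring_nf
    simpa using this.mul_const C
  refine tendsto_of_tendsto_of_tendsto_of_le_of_le' tendsto_const_nhds htend
    (Filter.Eventually.of_forall hlow) ?_
  filter_upwards [Filter.eventually_ge_atTop 1] with t ht using hupper t ht
end

section
/- Let m ∈ ℕ and let λ : [0,∞) → ℝ be a C² function satisfying λ''(t) = t^m λ(t) with λ(0) = 1 and λ(t) → 0 as t → +∞. Then λ(t) > 0 for all t ≥ 0, λ is strictly decreasing on [0,∞), and λ'(t) < 0 for all t > 0. -/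
open Set Filter Topology Real

/-! If `lam` took a negative value it would attain a negative minimum at some `t > 0`, where
`lam'' = t ^ m * lam < 0` contradicts the second-derivative test; so `lam ≥ 0`. A zero `t₀ > 0`
would then be a minimum, so `lam t₀ = lam' t₀ = 0`, and `lam'' ≤ t₀ ^ m * lam` on `[0, t₀]`;
the integrating factors `exp (∓ √(t₀ ^ m) * t)` turn this into `lam 0 ≤ 0`. Hence `lam > 0`, so
`lam'' > 0` on `(0, ∞)`: `lam` is convex with a finite limit at `+∞`, which forces `lam' ≤ 0`,
and the strict monotonicity of `lam'` makes it negative on `(0, ∞)`. -/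

theorem IsLocalMin.deriv_deriv_nonneg {f : ℝ → ℝ} {x : ℝ} (h : IsLocalMin f x)
    (hc : ContinuousAt f x) : 0 ≤ deriv (deriv f) x := by
  by_contra! hneg
  have hmax : IsLocalMax f x := isLocalMax_of_deriv_deriv_neg hneg h.deriv_eq_zero hc
  have hconst : f =ᶠ[𝓝 x] fun _ => f x := by
    filter_upwards [h, hmax] with y hy₁ hy₂ using le_antisymm hy₂ hy₁
  exact hneg.ne (by rw [hconst.deriv.deriv_eq, deriv_const', deriv_const])

theorem ContinuousOn.exists_isMinOn_Ici_of_tendsto {f : ℝ → ℝ} {a L x₀ : ℝ}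
    (hf : ContinuousOn f (Ici a)) (hlim : Tendsto f atTop (𝓝 L)) (hx₀ : x₀ ∈ Ici a)
    (hlt : f x₀ < L) : ∃ x ∈ Ici a, IsMinOn f (Ici a) x := by
  refine hf.exists_isMinOn' isClosed_Ici hx₀ ?_
  obtain ⟨B, hB⟩ := eventually_atTop.mp (hlim.eventually (lt_mem_nhds hlt))
  rw [eventually_inf_principal, Filter.Eventually, mem_cocompact]
  refine ⟨Icc a B, isCompact_Icc, fun x hx hxa => (hB x ?_).le⟩
  by_contra! hxB
  exact hx ⟨hxa, hxB.le⟩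

theorem ConvexOn.deriv_nonpos_of_tendsto {f : ℝ → ℝ} {a b L : ℝ}
    (hf : ConvexOn ℝ (Ici a) f) (hlim : Tendsto f atTop (𝓝 L)) (hb : a ≤ b)
    (hd : DifferentiableAt ℝ f b) : deriv f b ≤ 0 := by
  by_contra! hpos
  have htangent : ∀ t, b < t → f b + deriv f b * (t - b) ≤ f t := by
    intro t ht
    have := hf.deriv_le_slope hb (hb.trans ht.le) ht hd
    rw [slope_def_field, le_div_iff₀ (sub_pos.mpr ht)] at this
    linarith
  have hline : Tendsto (fun t => f b + deriv f b * (t - b)) atTop atTop :=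
    tendsto_atTop_add_const_left _ _ <|
      (tendsto_atTop_add_const_right _ _ tendsto_id).const_mul_atTop hpos
  exact not_tendsto_nhds_of_tendsto_atTop
    (tendsto_atTop_mono' _ ((eventually_gt_atTop b).mono htangent) hline) L hlim

theorem deriv_add_mul_nonneg_of_deriv_deriv_le_sq_mul {f : ℝ → ℝ} {a b c : ℝ}
    (hf : Differentiable ℝ f) (hf' : Differentiable ℝ (deriv f))
    (h : ∀ t ∈ Ioo a b, deriv (deriv f) t ≤ c ^ 2 * f t) (hfb : f b = 0)
    (hf'b : deriv f b = 0) : ∀ t ∈ Icc a b, 0 ≤ deriv f t + c * f t := by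
  have hg : ∀ t, HasDerivAt (fun t => (deriv f t + c * f t) * exp (-c * t))
      ((deriv (deriv f) t - c ^ 2 * f t) * exp (-c * t)) t := by
    intro t
    refine (((hf' t).hasDerivAt.add ((hf t).hasDerivAt.const_mul c)).mul
      (((hasDerivAt_id' t).const_mul (-c)).exp)).congr_deriv ?_
    simp only [Pi.add_apply]
    ring
  have hg_anti : AntitoneOn (fun t => (deriv f t + c * f t) * exp (-c * t)) (Icc a b) := by
    refine antitoneOn_of_hasDerivWithinAt_nonpos (convex_Icc a b)
      (fun t _ => (hg t).continuousAt.continuousWithinAt) (fun t _ => (hg t).hasDerivWithinAt)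
      fun t ht => ?_
    rw [interior_Icc] at ht
    exact mul_nonpos_of_nonpos_of_nonneg (sub_nonpos.mpr (h t ht)) (exp_pos _).le
  intro t ht
  have := hg_anti ht ⟨ht.1.trans ht.2, le_rfl⟩ ht.2
  dsimp only at this
  rw [hfb, hf'b, mul_zero, add_zero, zero_mul] at this
  exact (mul_nonneg_iff_of_pos_right (exp_pos _)).mp this

theorem nonpos_of_deriv_deriv_le_sq_mul {f : ℝ → ℝ} {a b c : ℝ} (hf : Differentiable ℝ f)
    (hf' : Differentiable ℝ (deriv f)) (hab : a ≤ b)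
    (h : ∀ t ∈ Ioo a b, deriv (deriv f) t ≤ c ^ 2 * f t) (hfb : f b = 0)
    (hf'b : deriv f b = 0) : f a ≤ 0 := by
  have hk : ∀ t, HasDerivAt (fun t => f t * exp (c * t))
      ((deriv f t + c * f t) * exp (c * t)) t := fun t =>
    ((hf t).hasDerivAt.mul (((hasDerivAt_id' t).const_mul c).exp)).congr_deriv (by ring)
  have hk_mono : MonotoneOn (fun t => f t * exp (c * t)) (Icc a b) := by
    refine monotoneOn_of_hasDerivWithinAt_nonneg (convex_Icc a b)
      (fun t _ => (hk t).continuousAt.continuousWithinAt) (fun t _ => (hk t).hasDerivWithinAt)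
      fun t ht => ?_
    rw [interior_Icc] at ht
    exact mul_nonneg (deriv_add_mul_nonneg_of_deriv_deriv_le_sq_mul hf hf' h hfb hf'b t
      (Ioo_subset_Icc_self ht)) (exp_pos _).le
  have := hk_mono (left_mem_Icc.mpr hab) (right_mem_Icc.mpr hab) hab
  dsimp only at this
  rw [hfb, zero_mul] at this
  exact nonpos_of_mul_nonpos_left this (exp_pos _)

section PowerCoefficient

variable {m : ℕ} {lam : ℝ → ℝ}

theorem nonneg_of_deriv_deriv_eq_pow_mul (hc : Continuous lam)
    (hode : ∀ t : ℝ, 0 ≤ t → deriv (deriv lam) t = t ^ m * lam t) (h0 : 0 ≤ lam 0)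
    (hlim : Tendsto lam atTop (𝓝 0)) {t : ℝ} (ht : 0 ≤ t) : 0 ≤ lam t := by
  by_contra! hneg
  obtain ⟨s, hs, hmin⟩ := hc.continuousOn.exists_isMinOn_Ici_of_tendsto hlim ht hneg
  have hs_neg : lam s < 0 := (isMinOn_iff.mp hmin t ht).trans_lt hneg
  have hs_pos : 0 < s := hs.lt_of_ne (by rintro rfl; linarith)
  have := (hmin.isLocalMin (Ici_mem_nhds hs_pos)).deriv_deriv_nonneg hc.continuousAt
  rw [hode s hs] at this
  exact this.not_gt (mul_neg_of_pos_of_neg (pow_pos hs_pos m) hs_neg)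

theorem pos_of_deriv_deriv_eq_pow_mul (hd : Differentiable ℝ lam)
    (hd' : Differentiable ℝ (deriv lam))
    (hode : ∀ t : ℝ, 0 ≤ t → deriv (deriv lam) t = t ^ m * lam t)
    (hnonneg : ∀ t : ℝ, 0 ≤ t → 0 ≤ lam t) (h0 : 0 < lam 0) {t : ℝ} (ht : 0 ≤ t) :
    0 < lam t := by
  refine (hnonneg t ht).lt_of_ne' fun hzero => ?_
  have ht_pos : 0 < t := ht.lt_of_ne (by rintro rfl; linarith)
  have hmin : IsMinOn lam (Ici 0) t := fun s hs => show lam t ≤ lam s from hzero ▸ hnonneg s hs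
  refine h0.not_ge (nonpos_of_deriv_deriv_le_sq_mul (c := √(t ^ m)) hd hd' ht (fun s hs => ?_)
    hzero (hmin.isLocalMin (Ici_mem_nhds ht_pos)).deriv_eq_zero)
  rw [hode s hs.1.le, sq_sqrt (pow_nonneg ht m)]
  exact mul_le_mul_of_nonneg_right (pow_le_pow_left₀ hs.1.le hs.2.le m) (hnonneg s hs.1.le)

end PowerCoefficient

theorem stmt2 (m : ℕ) (lam : ℝ → ℝ)
    (hC2 : ContDiff ℝ 2 lam)
    (hode : ∀ t : ℝ, 0 ≤ t → deriv (deriv lam) t = t ^ m * lam t)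
    (h0 : lam 0 = 1)
    (hlim : Filter.Tendsto lam Filter.atTop (nhds 0)) :
    (∀ t : ℝ, 0 ≤ t → 0 < lam t) ∧
      StrictAntiOn lam (Set.Ici 0) ∧
      (∀ t : ℝ, 0 < t → deriv lam t < 0) := by
  have hd : Differentiable ℝ lam := hC2.differentiable (by norm_num)
  have hd' : Differentiable ℝ (deriv lam) :=
    (contDiff_succ_iff_deriv.mp hC2).2.2.differentiable one_ne_zero
  have h0_pos : 0 < lam 0 := h0 ▸ one_pos
  have hpos : ∀ t : ℝ, 0 ≤ t → 0 < lam t := fun t =>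
    pos_of_deriv_deriv_eq_pow_mul hd hd' hode
      (fun _ => nonneg_of_deriv_deriv_eq_pow_mul hd.continuous hode h0_pos.le hlim) h0_pos
  have hderiv_mono : StrictMonoOn (deriv lam) (Ici 0) := by
    refine strictMonoOn_of_deriv_pos (convex_Ici 0) hd'.continuous.continuousOn fun t ht => ?_
    rw [interior_Ici] at ht
    rw [hode t ht.le]
    exact mul_pos (pow_pos ht m) (hpos t ht.le)
  have hconvex : ConvexOn ℝ (Ici 0) lam :=
    (hderiv_mono.monotoneOn.mono interior_subset).convexOn_of_deriv (convex_Ici 0)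
      hd.continuous.continuousOn hd.differentiableOn
  have hderiv_neg : ∀ t : ℝ, 0 < t → deriv lam t < 0 := fun t ht =>
    (hderiv_mono ht.le (show (0 : ℝ) ≤ t + 1 by positivity) (lt_add_one t)).trans_le
      (hconvex.deriv_nonpos_of_tendsto hlim (by positivity) (hd _))
  refine ⟨hpos, strictAntiOn_of_deriv_neg (convex_Ici 0) hd.continuous.continuousOn
    fun t ht => ?_, hderiv_neg⟩
  rw [interior_Ici] at ht
  exact hderiv_neg t ht
end

section
/- Let m ∈ ℕ and let λ : [0,∞) → ℝ be a C² function satisfying λ''(t) = t^m λ(t), λ(0) = 1, λ(t) → 0 as t → +∞, with λ > 0 and λ' < 0 on (0,∞). Then for all a ≥ b > 0, λ(a)/λ(b) ≤ (a/b)^{1/2} · exp( (2/(m+2)) b^{(m+2)/2} − (2/(m+2)) a^{(m+2)/2} ). -/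
/-!
Put `Ψ(t) = 2/(m+2) · t^((m+2)/2) - (log t)/2` and `φ = Ψ' = t^(m/2) - 1/(2t)`. The inequality says
that `λ e^Ψ` is nonincreasing on `(0, ∞)`, i.e. that `g = λ' + φ λ ≤ 0` there.
Along `λ'' = t^m λ` one has `(g e^(-Ψ))' = (t^m + φ' - φ²) λ e^(-Ψ)`, and
`t^m + φ' - φ² = (m/2 + 1) t^(m/2 - 1) + 1/(4t²) > 0`, so `g e^(-Ψ)` is nondecreasing.
On the other hand `λ' < 0` and `λ` decreases, so `g(T) e^(-Ψ(T)) ≤ λ(1) T^(m/2) e^(-Ψ(T)) → 0`.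
Hence `g e^(-Ψ) ≤ 0`.
-/

open Real Filter Set Topology

noncomputable def decayExponent (m : ℕ) (t : ℝ) : ℝ :=
  2 / ((m : ℝ) + 2) * t ^ (((m : ℝ) + 2) / 2) - log t / 2

noncomputable def decayRate (m : ℕ) (t : ℝ) : ℝ := t ^ ((m : ℝ) / 2) - 1 / (2 * t)

section IntegratingFactor

variable {f f' : ℝ → ℝ} {a : ℝ}

theorem monotoneOn_Ioi_of_hasDerivAt_nonneg (hf : ∀ x ∈ Ioi a, HasDerivAt f (f' x) x)
    (hf' : ∀ x ∈ Ioi a, 0 ≤ f' x) : MonotoneOn f (Ioi a) :=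
  monotoneOn_of_hasDerivWithinAt_nonneg (convex_Ioi a)
    (fun x hx ↦ (hf x hx).continuousAt.continuousWithinAt)
    (by simpa using fun x hx ↦ (hf x hx).hasDerivWithinAt) (by simpa using hf')

theorem antitoneOn_Ioi_of_hasDerivAt_nonpos (hf : ∀ x ∈ Ioi a, HasDerivAt f (f' x) x)
    (hf' : ∀ x ∈ Ioi a, f' x ≤ 0) : AntitoneOn f (Ioi a) :=
  antitoneOn_of_hasDerivWithinAt_nonpos (convex_Ioi a)
    (fun x hx ↦ (hf x hx).continuousAt.continuousWithinAt)
    (by simpa using fun x hx ↦ (hf x hx).hasDerivWithinAt) (by simpa using hf')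

variable {u Ψ φ : ℝ → ℝ} {t u' ψ q φ' : ℝ}

theorem hasDerivAt_mul_exp (hu : HasDerivAt u u' t) (hΨ : HasDerivAt Ψ ψ t) :
    HasDerivAt (fun s ↦ u s * exp (Ψ s)) ((u' + ψ * u t) * exp (Ψ t)) t :=
  (hu.mul hΨ.exp).congr_deriv (by ring)

theorem hasDerivAt_riccati (hu : HasDerivAt u (deriv u t) t)
    (hu' : HasDerivAt (deriv u) (q * u t) t) (hφ : HasDerivAt φ φ' t) (hΨ : HasDerivAt Ψ (φ t) t) :
    HasDerivAt (fun s ↦ (deriv u s + φ s * u s) * exp (-Ψ s))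
      ((q + φ' - φ t ^ 2) * u t * exp (-Ψ t)) t :=
  (hasDerivAt_mul_exp (hu'.add (hφ.mul hu)) hΨ.neg).congr_deriv <| by
    simp only [Pi.add_apply, Pi.mul_apply, Pi.neg_apply]
    ring

end IntegratingFactor

section DecayExponent

variable (m : ℕ) {t : ℝ}

theorem hasDerivAt_decayExponent (ht : 0 < t) :
    HasDerivAt (decayExponent m) (decayRate m t) t := by
  have hF := (hasDerivAt_rpow_const (p := ((m : ℝ) + 2) / 2) (Or.inl ht.ne')).const_mul
    (2 / ((m : ℝ) + 2))
  refine (hF.sub ((hasDerivAt_log ht.ne').div_const 2)).congr_deriv ?_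
  rw [show ((m : ℝ) + 2) / 2 - 1 = (m : ℝ) / 2 by ring, decayRate]
  field_simp

theorem hasDerivAt_decayRate (ht : 0 < t) :
    HasDerivAt (decayRate m) ((m : ℝ) / 2 * t ^ ((m : ℝ) / 2) / t + 1 / (2 * t ^ 2)) t := by
  have hinv := (hasDerivAt_const t (1 : ℝ)).div ((hasDerivAt_id' t).const_mul 2) (by positivity)
  refine ((hasDerivAt_rpow_const (Or.inl ht.ne')).sub hinv).congr_deriv ?_
  rw [rpow_sub_one ht.ne']
  field_simp
  ring

theorem riccati_decayRate_pos (ht : 0 < t) :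
    0 < t ^ m + ((m : ℝ) / 2 * t ^ ((m : ℝ) / 2) / t + 1 / (2 * t ^ 2)) - decayRate m t ^ 2 := by
  have hsq : (t ^ ((m : ℝ) / 2)) ^ 2 = t ^ m := by
    rw [← rpow_natCast, ← rpow_mul ht.le, ← rpow_natCast]
    congr 1
    push_cast
    ring
  have hx := rpow_pos_of_pos ht ((m : ℝ) / 2)
  have key : t ^ m + ((m : ℝ) / 2 * t ^ ((m : ℝ) / 2) / t + 1 / (2 * t ^ 2)) - decayRate m t ^ 2
      = ((m : ℝ) / 2 + 1) * t ^ ((m : ℝ) / 2) / t + 1 / (4 * t ^ 2) := by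
    rw [decayRate, ← hsq]
    field_simp
    ring
  rw [key]
  positivity

theorem exp_neg_decayExponent (ht : 0 < t) :
    exp (-decayExponent m t) =
      t ^ ((1 : ℝ) / 2) * exp (-(2 / ((m : ℝ) + 2) * t ^ (((m : ℝ) + 2) / 2))) := by
  rw [decayExponent, rpow_def_of_pos ht (1 / 2), ← exp_add]
  congr 1
  ring

theorem tendsto_rpow_mul_exp_neg_decayExponent :
    Tendsto (fun t ↦ t ^ ((m : ℝ) / 2) * exp (-decayExponent m t)) atTop (𝓝 0) := by
  have hc : (0 : ℝ) < 2 / ((m : ℝ) + 2) := by positivity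
  refine tendsto_of_tendsto_of_tendsto_of_le_of_le' tendsto_const_nhds
    (tendsto_rpow_mul_exp_neg_mul_atTop_nhds_zero (((m : ℝ) + 1) / 2) _ hc) ?_ ?_
  · filter_upwards [eventually_gt_atTop 0] with t ht
    exact (mul_pos (rpow_pos_of_pos ht _) (exp_pos _)).le
  · filter_upwards [eventually_ge_atTop 1] with t ht
    have ht0 : 0 < t := zero_lt_one.trans_le ht
    have hlin : t ≤ t ^ (((m : ℝ) + 2) / 2) := by
      simpa using rpow_le_rpow_of_exponent_le ht (by linarith [m.cast_nonneg (α := ℝ)] :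
        (1 : ℝ) ≤ ((m : ℝ) + 2) / 2)
    calc t ^ ((m : ℝ) / 2) * exp (-decayExponent m t)
        = t ^ (((m : ℝ) + 1) / 2) * exp (-(2 / ((m : ℝ) + 2) * t ^ (((m : ℝ) + 2) / 2))) := by
          rw [exp_neg_decayExponent m ht0, ← mul_assoc, ← rpow_add ht0]
          ring_nf
      _ ≤ t ^ (((m : ℝ) + 1) / 2) * exp (-(2 / ((m : ℝ) + 2)) * t) := by
          gcongr
          nlinarith

end DecayExponent

section AiryType

variable {m : ℕ} {lam : ℝ → ℝ}

theorem deriv_add_decayRate_mul_nonpos (hdiff : Differentiable ℝ lam)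
    (hode : ∀ t, 0 < t → HasDerivAt (deriv lam) (t ^ m * lam t) t)
    (hpos : ∀ t, 0 < t → 0 < lam t) (hneg : ∀ t, 0 < t → deriv lam t < 0) {t : ℝ} (ht : 0 < t) :
    deriv lam t + decayRate m t * lam t ≤ 0 := by
  set H := fun s ↦ (deriv lam s + decayRate m s * lam s) * exp (-decayExponent m s)
  have hH : ∀ s, 0 < s → HasDerivAt H
      ((s ^ m + ((m : ℝ) / 2 * s ^ ((m : ℝ) / 2) / s + 1 / (2 * s ^ 2)) - decayRate m s ^ 2) *
        lam s * exp (-decayExponent m s)) s := fun s hs ↦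
    hasDerivAt_riccati (hdiff s).hasDerivAt (hode s hs) (hasDerivAt_decayRate m hs)
      (hasDerivAt_decayExponent m hs)
  have hmono : MonotoneOn H (Ioi 0) := monotoneOn_Ioi_of_hasDerivAt_nonneg hH fun s hs ↦
    (mul_pos (mul_pos (riccati_decayRate_pos m hs) (hpos s hs)) (exp_pos _)).le
  have hanti : AntitoneOn lam (Ioi 0) :=
    (strictAntiOn_of_deriv_neg (convex_Ioi 0) hdiff.continuous.continuousOn
      (by simpa using hneg)).antitoneOn
  have hbound : ∀ T, 1 ≤ T → H T ≤ lam 1 * (T ^ ((m : ℝ) / 2) * exp (-decayExponent m T)) := by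
    intro T hT
    have hT0 : 0 < T := zero_lt_one.trans_le hT
    have hrate : decayRate m T ≤ T ^ ((m : ℝ) / 2) := sub_le_self _ (by positivity)
    have hprod : decayRate m T * lam T ≤ T ^ ((m : ℝ) / 2) * lam 1 :=
      mul_le_mul hrate (hanti (mem_Ioi.2 one_pos) hT0 hT) (hpos T hT0).le (rpow_nonneg hT0.le _)
    calc H T ≤ T ^ ((m : ℝ) / 2) * lam 1 * exp (-decayExponent m T) :=
          mul_le_mul_of_nonneg_right (by linarith [hneg T hT0]) (exp_pos _).le
      _ = lam 1 * (T ^ ((m : ℝ) / 2) * exp (-decayExponent m T)) := by ring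
  have hH0 : H t ≤ 0 := by
    have hlim := (tendsto_rpow_mul_exp_neg_decayExponent m).const_mul (lam 1)
    rw [mul_zero] at hlim
    refine ge_of_tendsto hlim ?_
    filter_upwards [eventually_ge_atTop (max t 1)] with T hT
    exact (hmono ht (ht.trans_le (le_of_max_le_left hT)) (le_of_max_le_left hT)).trans
      (hbound T (le_of_max_le_right hT))
  exact nonpos_of_mul_nonpos_left hH0 (exp_pos _)

theorem antitoneOn_mul_exp_decayExponent (hdiff : Differentiable ℝ lam)
    (hode : ∀ t, 0 < t → HasDerivAt (deriv lam) (t ^ m * lam t) t)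
    (hpos : ∀ t, 0 < t → 0 < lam t) (hneg : ∀ t, 0 < t → deriv lam t < 0) :
    AntitoneOn (fun t ↦ lam t * exp (decayExponent m t)) (Ioi 0) := by
  have hL : ∀ t, 0 < t → HasDerivAt (fun s ↦ lam s * exp (decayExponent m s))
      ((deriv lam t + decayRate m t * lam t) * exp (decayExponent m t)) t := fun t ht ↦
    hasDerivAt_mul_exp (hdiff t).hasDerivAt (hasDerivAt_decayExponent m ht)
  exact antitoneOn_Ioi_of_hasDerivAt_nonpos hL fun t ht ↦ mul_nonpos_of_nonpos_of_nonneg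
    (deriv_add_decayRate_mul_nonpos hdiff hode hpos hneg ht) (exp_pos _).le

end AiryType

theorem stmt3_general (m : ℕ) (lam : ℝ → ℝ)
    (hC2 : ContDiff ℝ 2 lam)
    (hode : ∀ t : ℝ, 0 ≤ t → deriv (deriv lam) t = t ^ m * lam t)
    (hpos : ∀ t : ℝ, 0 ≤ t → 0 < lam t)
    (hneg : ∀ t : ℝ, 0 < t → deriv lam t < 0) :
    ∀ a b : ℝ, 0 < b → b ≤ a →
      lam a / lam b ≤ (a / b) ^ ((1 : ℝ) / 2) *
        Real.exp (2 / ((m : ℝ) + 2) * b ^ (((m : ℝ) + 2) / 2)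
          - 2 / ((m : ℝ) + 2) * a ^ (((m : ℝ) + 2) / 2)) := by
  intro a b hb hba
  have ha : 0 < a := hb.trans_le hba
  have hmono := antitoneOn_mul_exp_decayExponent (hC2.differentiable two_ne_zero)
    (fun t ht ↦ hode t ht.le ▸ (hC2.differentiable_deriv_two t).hasDerivAt) (fun t ht ↦ hpos t ht.le) hneg hb ha hba
  calc lam a / lam b ≤ exp (-decayExponent m a) / exp (-decayExponent m b) := by
        rw [div_le_div_iff₀ (hpos b hb.le) (exp_pos _), exp_neg, exp_neg]
        field_simp
        simpa only [mul_comm] using hmono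
    _ = _ := by
        rw [exp_neg_decayExponent m ha, exp_neg_decayExponent m hb, div_rpow ha.le hb.le, exp_sub,
          exp_neg, exp_neg]
        field_simp

theorem stmt3 (m : ℕ) (lam : ℝ → ℝ)
    (hC2 : ContDiff ℝ 2 lam)
    (hode : ∀ t : ℝ, 0 ≤ t → deriv (deriv lam) t = t ^ m * lam t)
    (h0 : lam 0 = 1)
    (hlim : Filter.Tendsto lam Filter.atTop (nhds 0))
    (hpos : ∀ t : ℝ, 0 ≤ t → 0 < lam t)
    (hneg : ∀ t : ℝ, 0 < t → deriv lam t < 0) :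
    ∀ a b : ℝ, 0 < b → b ≤ a →
      lam a / lam b ≤ (a / b) ^ ((1 : ℝ) / 2) *
        Real.exp (2 / ((m : ℝ) + 2) * b ^ (((m : ℝ) + 2) / 2)
          - 2 / ((m : ℝ) + 2) * a ^ (((m : ℝ) + 2) / 2)) :=
  stmt3_general m lam hC2 hode hpos hneg
end

section
/- Let m ∈ ℕ and let λ : [0,∞) → ℝ be a C² function satisfying λ''(t) = t^m λ(t), λ(0) = 1, λ(+∞) = 0, with λ > 0 and λ' < 0 on (0,∞). Then there exists a constant C > 1 such that |λ'(t)| / (λ(t) t^{m/2}) ≥ 1/C for all t > 0, and |λ'(t)| / (λ(t) t^{m/2}) ≤ C for all t ≥ 1. -/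
/-!
The logarithmic derivative `v = λ'/λ` is negative and solves the Riccati equation
`v' = t^m - v²` on `(0, ∞)`, so both bounds compare `v` with `-t^(m/2)`.

If `v² < t^m` at some `t₀`, then `h = t^m - v²` satisfies `h' = m t^(m-1) - 2 v h`, which is
positive wherever `h` equals `h(t₀) > 0`; so `v' = h ≥ h(t₀)` from `t₀` on, and `v` eventually
becomes nonnegative.

If `v < -(m+2) t^(m/2)` at some `t₀ ≥ 1`, that curve is a fence `v` cannot cross upwards, since
`C² - 1 > C m / 2` for `C = m + 2`. Then `v² ≥ 2 t^m`, so `(1/v)' = 1 - t^m/v² ≥ 1/2`, and the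
negative function `1/v` eventually becomes nonnegative.
-/

open Real Set

theorem rpow_natCast_div_two_sq {x : ℝ} (hx : 0 ≤ x) (n : ℕ) :
    (x ^ ((n : ℝ) / 2)) ^ 2 = x ^ n := by
  rw [rpow_div_two_eq_sqrt _ hx, rpow_natCast, ← pow_mul, mul_comm, pow_mul, sq_sqrt hx]

theorem hasDerivAt_logDeriv_of_hasDerivAt_deriv {f : ℝ → ℝ} {q t : ℝ}
    (hf : DifferentiableAt ℝ f t) (hf' : HasDerivAt (deriv f) (q * f t) t) (h : f t ≠ 0) :
    HasDerivAt (logDeriv f) (q - logDeriv f t ^ 2) t := by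
  refine (hf'.div hf.hasDerivAt h).congr_deriv ?_
  rw [logDeriv_apply]
  field_simp

theorem exists_nonneg_of_le_hasDerivAt {u u' : ℝ → ℝ} {a δ : ℝ} (hδ : 0 < δ)
    (hu : ∀ x, a ≤ x → HasDerivAt u (u' x) x) (hle : ∀ x, a ≤ x → δ ≤ u' x) :
    ∃ x, a ≤ x ∧ 0 ≤ u x := by
  set b := a + (|u a| + 1) / δ
  have hba : δ * (b - a) = |u a| + 1 := by simp only [b]; field_simp; ring
  have hab : a < b := by nlinarith [abs_nonneg (u a)]
  obtain ⟨c, hc, hslope⟩ := exists_hasDerivAt_eq_slope u u' hab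
    (fun x hx => (hu x hx.1).continuousAt.continuousWithinAt) (fun x hx => hu x hx.1.le)
  have hincr : δ * (b - a) ≤ u b - u a := by
    rw [← le_div_iff₀ (sub_pos.2 hab), ← hslope]
    exact hle c hc.1.le
  exact ⟨b, hab.le, by linarith [neg_abs_le (u a)]⟩

theorem rpow_le_neg_of_riccati {m : ℕ} {v : ℝ → ℝ}
    (hv : ∀ t, 0 < t → HasDerivAt v (t ^ m - v t ^ 2) t) (hneg : ∀ t, 0 < t → v t < 0)
    {t : ℝ} (ht : 0 < t) : t ^ ((m : ℝ) / 2) ≤ -v t := by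
  suffices hsq : t ^ m ≤ v t ^ 2 by
    refine le_of_sq_le_sq ?_ (by linarith [hneg t ht])
    rwa [rpow_natCast_div_two_sq ht.le, neg_sq]
  by_contra! hlt
  set c := t ^ m - v t ^ 2
  have hc : 0 < c := sub_pos.2 hlt
  have hh : ∀ s, 0 < s → HasDerivAt (fun s => s ^ m - v s ^ 2)
      (m * s ^ (m - 1) - 2 * v s * (s ^ m - v s ^ 2)) s := fun s hs => by
    simpa using (hasDerivAt_pow m s).fun_sub ((hv s hs).fun_pow 2)
  have hge : ∀ s, t ≤ s → c ≤ s ^ m - v s ^ 2 := fun s hs =>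
    image_le_of_deriv_right_lt_deriv_boundary' (f' := fun _ => 0) continuousOn_const
      (fun _ _ => hasDerivWithinAt_const _ _ _) le_rfl
      (fun x hx => (hh x (ht.trans_le hx.1)).continuousAt.continuousWithinAt)
      (fun x hx => (hh x (ht.trans_le hx.1)).hasDerivWithinAt)
      (fun x hx hcx => by
        have hx0 : 0 < x := ht.trans_le hx.1
        have := hneg x hx0
        rw [← hcx]
        nlinarith [pow_nonneg hx0.le (m - 1)])
      ⟨hs, le_rfl⟩
  obtain ⟨s, hs, hvs⟩ := exists_nonneg_of_le_hasDerivAt hc (fun s hs => hv s (ht.trans_le hs)) hge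
  exact (hneg s (ht.trans_le hs)).not_ge hvs

theorem neg_le_mul_rpow_of_riccati {m : ℕ} {v : ℝ → ℝ}
    (hv : ∀ t, 0 < t → HasDerivAt v (t ^ m - v t ^ 2) t) (hneg : ∀ t, 0 < t → v t < 0)
    {t : ℝ} (ht : 1 ≤ t) : -v t ≤ (m + 2) * t ^ ((m : ℝ) / 2) := by
  by_contra! hlt
  set C : ℝ := m + 2
  have hm : (0 : ℝ) ≤ m := m.cast_nonneg
  have hpos : ∀ s, t ≤ s → 0 < s := fun s hs => by linarith
  have hC : 2 ≤ C := by linarith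
  have hB : ∀ x, 0 < x → HasDerivAt (fun x => -C * x ^ ((m : ℝ) / 2))
      (-C * ((m / 2) * x ^ ((m : ℝ) / 2 - 1))) x :=
    fun x hx => (hasDerivAt_rpow_const (Or.inl hx.ne')).const_mul _
  have hbarrier : ∀ s, t ≤ s → v s ≤ -C * s ^ ((m : ℝ) / 2) := fun s hs =>
    image_le_of_deriv_right_lt_deriv_boundary'
      (fun x hx => (hv x (hpos x hx.1)).continuousAt.continuousWithinAt)
      (fun x hx => (hv x (hpos x hx.1)).hasDerivWithinAt) (by linarith)
      (fun x hx => (hB x (hpos x hx.1)).continuousAt.continuousWithinAt)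
      (fun x hx => (hB x (hpos x hx.1)).hasDerivWithinAt)
      (fun x hx hvx => by
        have hx1 : 1 ≤ x := ht.trans hx.1
        have hsq : v x ^ 2 = C ^ 2 * x ^ m := by
          rw [hvx, mul_pow, neg_sq, rpow_natCast_div_two_sq (by linarith)]
        have hexp : x ^ ((m : ℝ) / 2 - 1) ≤ x ^ m := by
          exact_mod_cast rpow_le_rpow_of_exponent_le hx1 (by linarith : (m : ℝ) / 2 - 1 ≤ m)
        have hxm : 0 < x ^ m := by positivity
        rw [hsq]
        nlinarith [mul_le_mul_of_nonneg_left hexp (by positivity : 0 ≤ C * (m / 2))])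
      ⟨hs, le_rfl⟩
  have hsq : ∀ s, t ≤ s → 2 * s ^ m ≤ v s ^ 2 := fun s hs => by
    have hCs : C ^ 2 * s ^ m ≤ v s ^ 2 := by
      rw [← rpow_natCast_div_two_sq (hpos s hs).le, ← mul_pow, ← neg_sq (v s)]
      exact pow_le_pow_left₀ (mul_nonneg (by linarith) (rpow_nonneg (hpos s hs).le _))
        (by linarith [hbarrier s hs]) 2
    have hC_sq : 2 ≤ C ^ 2 := by nlinarith
    nlinarith [mul_le_mul_of_nonneg_right hC_sq (pow_nonneg (hpos s hs).le m)]
  obtain ⟨s, hs, hinv⟩ := exists_nonneg_of_le_hasDerivAt (one_half_pos (α := ℝ))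
    (fun s hs => (hv s (hpos s hs)).inv (hneg s (hpos s hs)).ne) (fun s hs => by
      have := hsq s hs
      have : 0 < v s ^ 2 := by nlinarith [hneg s (hpos s hs)]
      rw [le_div_iff₀ this]
      linarith)
  exact (inv_lt_zero.2 (hneg s (hpos s hs))).not_ge hinv

theorem stmt4_general (m : ℕ) (lam : ℝ → ℝ)
    (hC2 : ContDiff ℝ 2 lam)
    (hode : ∀ t : ℝ, 0 ≤ t → deriv (deriv lam) t = t ^ m * lam t)
    (hpos : ∀ t : ℝ, 0 ≤ t → 0 < lam t)
    (hneg : ∀ t : ℝ, 0 < t → deriv lam t < 0) :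
    ∃ C : ℝ, 1 < C ∧
      (∀ t : ℝ, 0 < t → 1 / C ≤ |deriv lam t| / (lam t * t ^ ((m : ℝ) / 2))) ∧
      (∀ t : ℝ, 1 ≤ t → |deriv lam t| / (lam t * t ^ ((m : ℝ) / 2)) ≤ C) := by
  have hd : Differentiable ℝ lam := hC2.differentiable (by norm_num)
  have hd' : Differentiable ℝ (deriv lam) := by
    simpa using hC2.differentiable_iteratedDeriv 1 (by norm_num)
  have hv : ∀ t, 0 < t → HasDerivAt (logDeriv lam) (t ^ m - logDeriv lam t ^ 2) t :=
    fun t ht => hasDerivAt_logDeriv_of_hasDerivAt_deriv (hd t)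
      (hode t ht.le ▸ (hd' t).hasDerivAt) (hpos t ht.le).ne'
  have hvneg : ∀ t, 0 < t → logDeriv lam t < 0 :=
    fun t ht => div_neg_of_neg_of_pos (hneg t ht) (hpos t ht.le)
  have hratio : ∀ t, 0 < t →
      |deriv lam t| / (lam t * t ^ ((m : ℝ) / 2)) = -logDeriv lam t / t ^ ((m : ℝ) / 2) :=
    fun t ht => by
      rw [logDeriv_apply, abs_of_neg (hneg t ht)]
      ring
  have hm : (0 : ℝ) ≤ m := m.cast_nonneg
  refine ⟨m + 2, by linarith, fun t ht => ?_, fun t ht => ?_⟩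
  · have hp : 0 < t ^ ((m : ℝ) / 2) := by positivity
    rw [hratio t ht, le_div_iff₀ hp]
    calc 1 / (m + 2) * t ^ ((m : ℝ) / 2) ≤ t ^ ((m : ℝ) / 2) :=
          mul_le_of_le_one_left hp.le (by rw [div_le_one (by linarith)]; linarith)
      _ ≤ -logDeriv lam t := rpow_le_neg_of_riccati hv hvneg ht
  · rw [hratio t (by linarith), div_le_iff₀ (by positivity)]
    exact neg_le_mul_rpow_of_riccati hv hvneg ht

theorem stmt4 (m : ℕ) (lam : ℝ → ℝ)
    (hC2 : ContDiff ℝ 2 lam)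
    (hode : ∀ t : ℝ, 0 ≤ t → deriv (deriv lam) t = t ^ m * lam t)
    (h0 : lam 0 = 1)
    (hlim : Filter.Tendsto lam Filter.atTop (nhds 0))
    (hpos : ∀ t : ℝ, 0 ≤ t → 0 < lam t)
    (hneg : ∀ t : ℝ, 0 < t → deriv lam t < 0) :
    ∃ C : ℝ, 1 < C ∧
      (∀ t : ℝ, 0 < t → 1 / C ≤ |deriv lam t| / (lam t * t ^ ((m : ℝ) / 2))) ∧
      (∀ t : ℝ, 1 ≤ t → |deriv lam t| / (lam t * t ^ ((m : ℝ) / 2)) ≤ C) :=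
  stmt4_general m lam hC2 hode hpos hneg
end

section
/- Let m ∈ ℕ and let λ : [0,∞) → ℝ be a C² function satisfying λ''(t) = t^m λ(t), λ(0) = 1, λ(+∞) = 0, with λ > 0 and λ' < 0 on (0,∞). Then for every M ∈ ℕ there exists C_M > 0 such that λ(t) + |λ'(t)| ≤ C_M (1+t)^{-M} for all t ≥ 0. -/
/-!
On `[0, ∞)` the solution is convex, since `λ'' = t ^ m λ ≥ 0`, so `λ' → 0` together
with `λ`. For `t ≥ 1` we have `λ'' ≥ λ`, so the energy `λ' ^ 2 - λ ^ 2` has derivative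
`2 λ' (λ'' - λ) ≤ 0` and decreases to its limit `0`; hence `λ ≤ -λ'`. Then `e ^ t λ` is
nonincreasing, so `λ` decays like `e ^ (-t)`, and by convexity `λ t + |λ' t| ≤ λ (t - 1)`
decays at the same rate, which beats every power `(1 + t) ^ M`.
-/

open Filter Set Real Asymptotics Topology

namespace ConvexOn

variable {f : ℝ → ℝ} {a x : ℝ}

lemma sub_sub_one_le_deriv (hf : ConvexOn ℝ (Ici a) f) (hx : a + 1 ≤ x)
    (hfd : DifferentiableAt ℝ f x) : f x - f (x - 1) ≤ deriv f x := by
  have h := hf.slope_le_deriv (x := x - 1) (y := x) (by simp; linarith) (by simp; linarith)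
    (by linarith) hfd
  simpa [slope_def_field] using h

lemma deriv_le_add_one_sub (hf : ConvexOn ℝ (Ici a) f) (hx : a ≤ x)
    (hfd : DifferentiableAt ℝ f x) : deriv f x ≤ f (x + 1) - f x := by
  have h := hf.deriv_le_slope (x := x) (y := x + 1) (by simpa using hx) (by simp; linarith)
    (by linarith) hfd
  simpa [slope_def_field] using h

lemma add_abs_deriv_le (hf : ConvexOn ℝ (Ici a) f) (hx : a + 1 ≤ x)
    (hfd : DifferentiableAt ℝ f x) (hf' : deriv f x ≤ 0) : f x + |deriv f x| ≤ f (x - 1) := by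
  rw [abs_of_nonpos hf']
  linarith [hf.sub_sub_one_le_deriv hx hfd]

lemma tendsto_deriv_atTop_zero (hf : ConvexOn ℝ (Ici a) f)
    (hfd : ∀ x, a ≤ x → DifferentiableAt ℝ f x) {L : ℝ}
    (hlim : Tendsto f atTop (𝓝 L)) : Tendsto (deriv f) atTop (𝓝 0) := by
  have hdiff : ∀ c : ℝ, Tendsto (fun x => f (x + c) - f x) atTop (𝓝 0) := fun c => by
    simpa using (hlim.comp (tendsto_atTop_add_const_right _ c tendsto_id)).sub hlim
  have hlower : Tendsto (fun x => f x - f (x - 1)) atTop (𝓝 0) := by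
    simpa [← sub_eq_add_neg] using (hdiff (-1)).neg
  refine tendsto_of_tendsto_of_tendsto_of_le_of_le' hlower (hdiff 1) ?_ ?_
  · filter_upwards [eventually_ge_atTop (a + 1)] with x hx
    exact hf.sub_sub_one_le_deriv hx (hfd x (by linarith))
  · filter_upwards [eventually_ge_atTop a] with x hx
    exact hf.deriv_le_add_one_sub hx (hfd x hx)

end ConvexOn

section SecondOrder

variable {f : ℝ → ℝ} {a t : ℝ}

lemma abs_le_abs_deriv_of_le_deriv_deriv (hf : Differentiable ℝ f)
    (hf' : Differentiable ℝ (deriv f)) (hf'_nonpos : ∀ x, a < x → deriv f x ≤ 0)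
    (hf'' : ∀ x, a < x → f x ≤ deriv (deriv f) x) (hlim : Tendsto f atTop (𝓝 0))
    (hlim' : Tendsto (deriv f) atTop (𝓝 0)) (ht : a ≤ t) : |f t| ≤ |deriv f t| := by
  set E : ℝ → ℝ := fun x => deriv f x ^ 2 - f x ^ 2
  have hE : ∀ x, HasDerivAt E (2 * deriv f x * (deriv (deriv f) x - f x)) x := fun x =>
    (((hf' x).hasDerivAt.pow 2).sub ((hf x).hasDerivAt.pow 2)).congr_deriv (by ring)
  have hanti : AntitoneOn E (Ici a) := by
    refine antitoneOn_of_deriv_nonpos (convex_Ici a)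
      (fun x _ => (hE x).continuousAt.continuousWithinAt)
      (fun x _ => (hE x).differentiableAt.differentiableWithinAt) fun x hx => ?_
    rw [interior_Ici] at hx
    rw [(hE x).deriv]
    exact mul_nonpos_of_nonpos_of_nonneg (by linarith [hf'_nonpos x hx])
      (sub_nonneg.2 (hf'' x hx))
  have hElim : Tendsto E atTop (𝓝 0) := by simpa using (hlim'.pow 2).sub (hlim.pow 2)
  have hEt : 0 ≤ E t := le_of_tendsto hElim <| by
    filter_upwards [eventually_ge_atTop t] with s hs
    exact hanti ht (ht.trans hs) hs
  exact sq_le_sq.1 (sub_nonneg.1 hEt)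

lemma le_mul_exp_sub_of_deriv_le_neg (hf : Differentiable ℝ f)
    (hf' : ∀ x, a < x → deriv f x ≤ -f x) (ht : a ≤ t) : f t ≤ f a * exp (a - t) := by
  have hg : ∀ x, HasDerivAt (fun x => exp x * f x) (exp x * (f x + deriv f x)) x := fun x =>
    ((hasDerivAt_exp x).mul (hf x).hasDerivAt).congr_deriv (by ring)
  have hanti : AntitoneOn (fun x => exp x * f x) (Ici a) := by
    refine antitoneOn_of_deriv_nonpos (convex_Ici a)
      (fun x _ => (hg x).continuousAt.continuousWithinAt)
      (fun x _ => (hg x).differentiableAt.differentiableWithinAt) fun x hx => ?_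
    rw [interior_Ici] at hx
    rw [(hg x).deriv]
    exact mul_nonpos_of_nonneg_of_nonpos (exp_pos x).le (by linarith [hf' x hx])
  have h := hanti self_mem_Ici ht ht
  rw [exp_sub, mul_div_assoc', le_div_iff₀ (exp_pos t)]
  linarith

lemma ConvexOn.isBigO_add_abs_deriv_exp_neg (hf : ConvexOn ℝ (Ici a) f)
    (hd : Differentiable ℝ f) (hf_nonneg : ∀ x, a ≤ x → 0 ≤ f x)
    (hf' : ∀ x, a < x → deriv f x ≤ -f x) :
    (fun t => f t + |deriv f t|) =O[atTop] fun t => exp (-t) := by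
  refine IsBigO.of_bound (f a * exp (a + 1)) ?_
  filter_upwards [eventually_ge_atTop (a + 1)] with t ht
  have hf't : deriv f t ≤ 0 := by linarith [hf' t (by linarith), hf_nonneg t (by linarith)]
  calc ‖f t + |deriv f t|‖ = f t + |deriv f t| :=
        norm_of_nonneg (add_nonneg (hf_nonneg t (by linarith)) (abs_nonneg _))
    _ ≤ f (t - 1) := hf.add_abs_deriv_le ht (hd t) hf't
    _ ≤ f a * exp (a - (t - 1)) := le_mul_exp_sub_of_deriv_le_neg hd hf' (by linarith)
    _ = f a * exp (a + 1) * ‖exp (-t)‖ := by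
        rw [norm_of_nonneg (exp_pos _).le, mul_assoc, ← exp_add]
        ring_nf

end SecondOrder

lemma exists_pos_bound_of_isBigO_one {E : Type*} [NormedAddCommGroup E] {g : ℝ → E} {a : ℝ}
    (hg : ContinuousOn g (Ici a)) (hbig : g =O[atTop] fun _ => (1 : ℝ)) :
    ∃ C, 0 < C ∧ ∀ t, a ≤ t → ‖g t‖ ≤ C := by
  obtain ⟨c, hc⟩ := hbig.bound
  obtain ⟨T, hT⟩ := eventually_atTop.1 hc
  obtain ⟨K, hK⟩ := (isCompact_Icc (a := a) (b := T)).exists_bound_of_continuousOn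
    (hg.mono Icc_subset_Ici_self)
  refine ⟨max (max c K) 1, by positivity, fun t ht => ?_⟩
  rcases le_total t T with htT | hTt
  · exact (hK t ⟨ht, htT⟩).trans ((le_max_right c K).trans (le_max_left _ _))
  · exact (hT t hTt).trans (by simp)

lemma tendsto_one_add_pow_mul_exp_neg_atTop_nhds_zero (M : ℕ) :
    Tendsto (fun t => (1 + t) ^ M * exp (-t)) atTop (𝓝 0) := by
  have h := ((tendsto_pow_mul_exp_neg_atTop_nhds_zero M).comp
    (tendsto_atTop_add_const_left _ 1 tendsto_id)).const_mul (exp 1)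
  rw [mul_zero] at h
  refine h.congr fun t => ?_
  have he : exp 1 * exp (-1) = 1 := by rw [← exp_add]; simp
  simp only [Function.comp_apply, id, neg_add, exp_add]
  linear_combination (1 + t) ^ M * exp (-t) * he

lemma exists_bound_div_one_add_pow_of_isBigO_exp_neg {E : Type*} [NormedAddCommGroup E]
    [NormedSpace ℝ E] {f : ℝ → E} (hf : ContinuousOn f (Ici 0))
    (hdecay : f =O[atTop] fun t => exp (-t)) (M : ℕ) :
    ∃ C, 0 < C ∧ ∀ t, 0 ≤ t → ‖f t‖ ≤ C / (1 + t) ^ M := by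
  have hbig : (fun t => (1 + t) ^ M • f t) =O[atTop] fun _ => (1 : ℝ) :=
    ((isBigO_refl (fun t : ℝ => (1 + t) ^ M) atTop).smul hdecay).trans
      ((tendsto_one_add_pow_mul_exp_neg_atTop_nhds_zero M).isBigO_one ℝ)
  obtain ⟨C, hC, hbound⟩ := exists_pos_bound_of_isBigO_one (by fun_prop) hbig
  refine ⟨C, hC, fun t ht => ?_⟩
  have h := hbound t ht
  rw [norm_smul, norm_of_nonneg (by positivity)] at h
  rw [le_div_iff₀ (by positivity)]
  linarith

theorem stmt5_general (m : ℕ) (lam : ℝ → ℝ)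
    (hC2 : ContDiff ℝ 2 lam)
    (hode : ∀ t : ℝ, 0 ≤ t → deriv (deriv lam) t = t ^ m * lam t)
    (hlim : Filter.Tendsto lam Filter.atTop (nhds 0))
    (hpos : ∀ t : ℝ, 0 ≤ t → 0 < lam t)
    (hneg : ∀ t : ℝ, 0 < t → deriv lam t < 0) :
    ∀ M : ℕ, ∃ C : ℝ, 0 < C ∧
      ∀ t : ℝ, 0 ≤ t → lam t + |deriv lam t| ≤ C / (1 + t) ^ M := by
  have hd : Differentiable ℝ lam := hC2.differentiable (by norm_num)
  have hd' : Differentiable ℝ (deriv lam) := hC2.differentiable_deriv_two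
  have hconv : ConvexOn ℝ (Ici 0) lam :=
    convexOn_of_deriv2_nonneg (convex_Ici 0) hd.continuous.continuousOn hd.differentiableOn
      hd'.differentiableOn fun x hx => by
        rw [interior_Ici] at hx
        rw [Function.iterate_succ_apply, Function.iterate_one, hode x hx.le]
        exact mul_nonneg (pow_nonneg hx.le m) (hpos x hx.le).le
  have hdom : ∀ t, 1 < t → deriv lam t ≤ -lam t := fun t ht => by
    have h := abs_le_abs_deriv_of_le_deriv_deriv hd hd' (fun x hx => (hneg x (by linarith)).le)
      (fun x hx => by
        rw [hode x (by linarith)]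
        exact le_mul_of_one_le_left (hpos x (by linarith)).le (one_le_pow₀ hx.le))
      hlim (hconv.tendsto_deriv_atTop_zero (fun x _ => hd x) hlim) ht.le
    rw [abs_of_pos (hpos t (by linarith)), abs_of_neg (hneg t (by linarith))] at h
    linarith
  have hconv₁ : ConvexOn ℝ (Ici 1) lam := hconv.subset (Ici_subset_Ici.2 zero_le_one) (convex_Ici 1)
  have hdecay := hconv₁.isBigO_add_abs_deriv_exp_neg hd (fun x hx => (hpos x (by linarith)).le) hdom
  intro M
  obtain ⟨C, hC, hbound⟩ := exists_bound_div_one_add_pow_of_isBigO_exp_neg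
    (hd.continuous.add hd'.continuous.abs).continuousOn hdecay M
  exact ⟨C, hC, fun t ht => (le_abs_self _).trans (hbound t ht)⟩

theorem stmt5 (m : ℕ) (lam : ℝ → ℝ)
    (hC2 : ContDiff ℝ 2 lam)
    (hode : ∀ t : ℝ, 0 ≤ t → deriv (deriv lam) t = t ^ m * lam t)
    (h0 : lam 0 = 1)
    (hlim : Filter.Tendsto lam Filter.atTop (nhds 0))
    (hpos : ∀ t : ℝ, 0 ≤ t → 0 < lam t)
    (hneg : ∀ t : ℝ, 0 < t → deriv lam t < 0) :
    ∀ M : ℕ, ∃ C : ℝ, 0 < C ∧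
      ∀ t : ℝ, 0 ≤ t → lam t + |deriv lam t| ≤ C / (1 + t) ^ M :=
  stmt5_general m lam hC2 hode hlim hpos hneg
end

section
/- Let m ∈ ℕ and λ be the decaying solution of λ'' = t^m λ with λ(0) = 1, λ(+∞) = 0, λ > 0, λ' < 0 on (0,∞). Define for t, σ, s > 0 the kernel K̂(t,σ) = s^{m+2} σ^m ∫_0^{min(t,σ)} λ(ts) λ(σs) / λ(ys)² dy (here s > 0 is a parameter). Then for every fixed t > 0 and s > 0, ∫_0^∞ K̂(t,σ) dσ = 1 − λ(ts), and in particular ∫_0^∞ K̂(t,σ) dσ ≤ 1. -/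
/-!
Put u(σ) = λ(σ s) and q(σ) = s^(m+2) σ^m, so that u'' = q u on [0, ∞) and
K̂(t, σ) = u(t) q(σ) u(σ) Φ(min t σ) with Φ(σ) = ∫₀^σ u⁻². On (0, t] the integrand q u Φ has the
primitive u' Φ + 1/u, and on (t, ∞) it is Φ(t) q u, with primitive Φ(t) u'. Since u'' ≥ 0 and u
converges, u' → 0 at infinity, so the two pieces give u'(t) Φ(t) + 1/u(t) - 1 and -u'(t) Φ(t):
the integral is u(t) (1/u(t) - 1) = 1 - u(t).
-/

open Set Filter Topology MeasureTheory

theorem tendsto_deriv_atTop_zero_of_monotoneOn {f f' : ℝ → ℝ} {a c : ℝ}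
    (hf : ∀ x, a ≤ x → HasDerivAt f (f' x) x) (hf' : MonotoneOn f' (Ici a))
    (hlim : Tendsto f atTop (𝓝 c)) : Tendsto f' atTop (𝓝 0) := by
  -- mean value theorem and monotonicity squeeze: f x - f (x - 1) ≤ f' x ≤ f (x + 1) - f x
  have slope : ∀ x, a ≤ x → ∃ ξ ∈ Ioo x (x + 1), f' ξ = f (x + 1) - f x := fun x hx => by
    simpa using exists_hasDerivAt_eq_slope f f' (lt_add_one x)
      (fun y hy => (hf y (hx.trans hy.1)).continuousAt.continuousWithinAt)
      (fun y hy => hf y (hx.trans hy.1.le))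
  have hshift (d : ℝ) : Tendsto (fun x => f (x + d)) atTop (𝓝 c) :=
    hlim.comp (tendsto_atTop_add_const_right _ d tendsto_id)
  refine tendsto_of_tendsto_of_tendsto_of_le_of_le' (g := fun x => f (x + -1 + 1) - f (x + -1))
    (h := fun x => f (x + 1) - f x) ?_ ?_ ?_ ?_
  · simpa using (hshift 0).sub (hshift (-1))
  · simpa using (hshift 1).sub (hshift 0)
  · filter_upwards [eventually_ge_atTop (a + 1)] with x hx
    obtain ⟨ξ, hξ, h⟩ := slope (x + -1) (by linarith)
    rw [← h]
    exact hf' (by simp only [mem_Ici]; linarith [hξ.1]) (by simp only [mem_Ici]; linarith)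
      (by linarith [hξ.2])
  · filter_upwards [eventually_ge_atTop a] with x hx
    obtain ⟨ξ, hξ, h⟩ := slope x hx
    rw [← h]
    exact hf' hx (by simp only [mem_Ici]; linarith [hξ.1]) hξ.1.le

section SecondOrderLinear

variable {u u' q : ℝ → ℝ}

theorem monotoneOn_of_hasDerivAt_mul_nonneg (hu' : ∀ x, 0 ≤ x → HasDerivAt u' (q x * u x) x)
    (hq : ∀ x, 0 ≤ x → 0 ≤ q x) (hu : ∀ x, 0 ≤ x → 0 ≤ u x) : MonotoneOn u' (Ici 0) := by
  refine monotoneOn_of_hasDerivWithinAt_nonneg (f' := fun x => q x * u x) (convex_Ici 0)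
    (fun x hx => (hu' x hx).continuousAt.continuousWithinAt) (fun x hx => ?_) (fun x hx => ?_)
  · rw [interior_Ici] at hx
    exact (hu' x (le_of_lt hx)).hasDerivWithinAt
  · rw [interior_Ici] at hx
    exact mul_nonneg (hq x hx.le) (hu x hx.le)

theorem continuousOn_integral_inv_sq (hu : ContinuousOn u (Ici 0))
    (hpos : ∀ x, 0 ≤ x → 0 < u x) {t : ℝ} (ht : 0 ≤ t) :
    ContinuousOn (fun σ => ∫ y in (0 : ℝ)..σ, (u y ^ 2)⁻¹) (Icc 0 t) := by
  rw [← uIcc_of_le ht]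
  refine intervalIntegral.continuousOn_primitive_interval (ContinuousOn.integrableOn_uIcc ?_)
  exact (hu.pow 2).inv₀ (fun x hx => pow_ne_zero 2 (hpos x hx).ne') |>.mono
    (by rw [uIcc_of_le ht]; exact Icc_subset_Ici_self)

theorem integral_mul_integral_inv_sq (hu : ∀ x, 0 ≤ x → HasDerivAt u (u' x) x)
    (hu' : ∀ x, 0 ≤ x → HasDerivAt u' (q x * u x) x) (hq : ContinuousOn q (Ici 0))
    (hpos : ∀ x, 0 ≤ x → 0 < u x) {t : ℝ} (ht : 0 ≤ t) :
    ∫ σ in (0 : ℝ)..t, q σ * u σ * ∫ y in (0 : ℝ)..σ, (u y ^ 2)⁻¹ =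
      u' t * (∫ y in (0 : ℝ)..t, (u y ^ 2)⁻¹) + (u t)⁻¹ - (u 0)⁻¹ := by
  set Φ : ℝ → ℝ := fun σ => ∫ y in (0 : ℝ)..σ, (u y ^ 2)⁻¹
  have hucont : ContinuousOn u (Ici 0) := fun x hx => (hu x hx).continuousAt.continuousWithinAt
  have hu'cont : ContinuousOn u' (Ici 0) := fun x hx => (hu' x hx).continuousAt.continuousWithinAt
  have hg : ContinuousOn (fun y => (u y ^ 2)⁻¹) (Ici 0) :=
    (hucont.pow 2).inv₀ fun x hx => pow_ne_zero 2 (hpos x hx).ne'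
  have hIcc : Icc 0 t ⊆ Ici 0 := Icc_subset_Ici_self
  have hΦcont : ContinuousOn Φ (Icc 0 t) := continuousOn_integral_inv_sq hucont hpos ht
  have hΦ : ∀ σ, 0 < σ → HasDerivAt Φ (u σ ^ 2)⁻¹ σ := fun σ hσ =>
    intervalIntegral.integral_hasDerivAt_right
      ((hg.mono Icc_subset_Ici_self).intervalIntegrable_of_Icc hσ.le)
      ((hg.mono Ioi_subset_Ici_self).stronglyMeasurableAtFilter isOpen_Ioi σ hσ)
      (hg.continuousAt (Ici_mem_nhds hσ))
  have hH : ∀ σ ∈ Ioo 0 t, HasDerivAt (fun σ => u' σ * Φ σ + (u σ)⁻¹) (q σ * u σ * Φ σ) σ := by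
    intro σ hσ
    have hne : u σ ≠ 0 := (hpos σ hσ.1.le).ne'
    refine (((hu' σ hσ.1.le).mul (hΦ σ hσ.1)).add ((hu σ hσ.1.le).inv hne)).congr_deriv ?_
    field_simp
    ring
  have hftc := intervalIntegral.integral_eq_sub_of_hasDerivAt_of_le ht
    ((hu'cont.mono hIcc).mul hΦcont |>.add ((hucont.mono hIcc).inv₀ fun x hx => (hpos x hx.1).ne'))
    hH (((hq.mono hIcc).mul (hucont.mono hIcc)).mul hΦcont |>.intervalIntegrable_of_Icc ht)
  simpa [Φ] using hftc

theorem setIntegral_Ioi_mul_integral_inv_sq_min (hu : ∀ x, 0 ≤ x → HasDerivAt u (u' x) x)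
    (hu' : ∀ x, 0 ≤ x → HasDerivAt u' (q x * u x) x) (hq : ContinuousOn q (Ici 0))
    (hq₀ : ∀ x, 0 ≤ x → 0 ≤ q x) (hpos : ∀ x, 0 ≤ x → 0 < u x) {c : ℝ}
    (hlim : Tendsto u atTop (𝓝 c)) {t : ℝ} (ht : 0 ≤ t) :
    ∫ σ in Ioi 0, q σ * u σ * ∫ y in (0 : ℝ)..min t σ, (u y ^ 2)⁻¹ = (u t)⁻¹ - (u 0)⁻¹ := by
  set Φ : ℝ → ℝ := fun σ => ∫ y in (0 : ℝ)..σ, (u y ^ 2)⁻¹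
  have hucont : ContinuousOn u (Ici 0) := fun x hx => (hu x hx).continuousAt.continuousWithinAt
  have hu'lim : Tendsto u' atTop (𝓝 0) := tendsto_deriv_atTop_zero_of_monotoneOn hu
    (monotoneOn_of_hasDerivAt_mul_nonneg hu' hq₀ fun x hx => (hpos x hx).le) hlim
  have htail : ∀ x ∈ Ici t, HasDerivAt u' (q x * u x) x := fun x hx => hu' x (ht.trans hx)
  have htail₀ : ∀ x ∈ Ioi t, 0 ≤ q x * u x := fun x hx =>
    mul_nonneg (hq₀ x (ht.trans hx.out.le)) (hpos x (ht.trans hx.out.le)).le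
  have hhead : IntegrableOn (fun σ => q σ * u σ * Φ σ) (Ioc 0 t) :=
    (((hq.mono Icc_subset_Ici_self).mul (hucont.mono Icc_subset_Ici_self)).mul
      (continuousOn_integral_inv_sq hucont hpos ht)).integrableOn_Icc.mono_set Ioc_subset_Icc_self
  have hmin_head : EqOn (fun σ => q σ * u σ * Φ (min t σ)) (fun σ => q σ * u σ * Φ σ) (Ioc 0 t) :=
    fun σ hσ => by simp only [min_eq_right hσ.2]
  have hmin_tail : EqOn (fun σ => q σ * u σ * Φ (min t σ)) (fun σ => Φ t * (q σ * u σ)) (Ioi t) :=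
    fun σ hσ => by simp only [min_eq_left hσ.out.le]; ring
  rw [← Ioc_union_Ioi_eq_Ioi ht, setIntegral_union (Ioc_disjoint_Ioi le_rfl) measurableSet_Ioi
      (hhead.congr_fun hmin_head.symm measurableSet_Ioc)
      (IntegrableOn.congr_fun ((integrableOn_Ioi_deriv_of_nonneg' htail htail₀ hu'lim).const_mul
        (Φ t)) hmin_tail.symm measurableSet_Ioi),
    setIntegral_congr_fun measurableSet_Ioc hmin_head, setIntegral_congr_fun measurableSet_Ioi hmin_tail,
    integral_const_mul, integral_Ioi_of_hasDerivAt_of_nonneg' htail htail₀ hu'lim,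
    ← intervalIntegral.integral_of_le ht, integral_mul_integral_inv_sq hu hu' hq hpos ht]
  ring

end SecondOrderLinear

theorem stmt7_general (m : ℕ) (lam : ℝ → ℝ)
    (hC2 : ContDiff ℝ 2 lam)
    (hode : ∀ t : ℝ, 0 ≤ t → deriv (deriv lam) t = t ^ m * lam t)
    (h0 : lam 0 = 1)
    (hlim : Filter.Tendsto lam Filter.atTop (nhds 0))
    (hpos : ∀ t : ℝ, 0 ≤ t → 0 < lam t)
    (s : ℝ) (hs : 0 < s) :
    let K : ℝ → ℝ → ℝ := fun t σ => s ^ (m + 2) * σ ^ m *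
      ∫ y in Set.Ioc (0 : ℝ) (min t σ), lam (t * s) * lam (σ * s) / (lam (y * s)) ^ 2
    ∀ t : ℝ, 0 < t →
      (∫ σ in Set.Ioi (0 : ℝ), K t σ) = 1 - lam (t * s) ∧
      (∫ σ in Set.Ioi (0 : ℝ), K t σ) ≤ 1 := by
  intro K t ht
  have hd1 : Differentiable ℝ lam := hC2.differentiable two_ne_zero
  have hd2 : Differentiable ℝ (deriv lam) :=
    (contDiff_succ_iff_deriv.mp hC2).2.2.differentiable one_ne_zero
  set u : ℝ → ℝ := fun σ => lam (σ * s)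
  have hu (σ : ℝ) (_ : 0 ≤ σ) : HasDerivAt u (deriv lam (σ * s) * s) σ :=
    (hd1 _).hasDerivAt.comp σ (hasDerivAt_mul_const s)
  have hu' (σ : ℝ) (hσ : 0 ≤ σ) :
      HasDerivAt (fun σ => deriv lam (σ * s) * s) (s ^ (m + 2) * σ ^ m * u σ) σ :=
    (((hd2 _).hasDerivAt.comp σ (hasDerivAt_mul_const s)).mul_const s).congr_deriv
      (by rw [hode _ (by positivity)]; ring)
  have hK : EqOn (K t)
      (fun σ => lam (t * s) * (s ^ (m + 2) * σ ^ m * u σ * ∫ y in (0 : ℝ)..min t σ, (u y ^ 2)⁻¹))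
      (Ioi 0) := fun σ hσ => by
    simp only [K, u, div_eq_mul_inv, integral_const_mul,
      ← intervalIntegral.integral_of_le (le_min ht.le hσ.out.le)]
    ring
  have hint : ∫ σ in Ioi 0, K t σ = 1 - lam (t * s) := by
    rw [setIntegral_congr_fun measurableSet_Ioi hK, integral_const_mul,
      setIntegral_Ioi_mul_integral_inv_sq_min hu hu' (by fun_prop) (fun x hx => by positivity)
        (fun x hx => hpos _ (by positivity)) (hlim.comp (tendsto_id.atTop_mul_const hs)) ht.le]
    have : lam (t * s) ≠ 0 := (hpos _ (by positivity)).ne'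
    simp only [u, zero_mul, h0]
    field_simp
  exact ⟨hint, hint ▸ by linarith [hpos (t * s) (by positivity)]⟩

theorem stmt7 (m : ℕ) (lam : ℝ → ℝ)
    (hC2 : ContDiff ℝ 2 lam)
    (hode : ∀ t : ℝ, 0 ≤ t → deriv (deriv lam) t = t ^ m * lam t)
    (h0 : lam 0 = 1)
    (hlim : Filter.Tendsto lam Filter.atTop (nhds 0))
    (hpos : ∀ t : ℝ, 0 ≤ t → 0 < lam t)
    (hneg : ∀ t : ℝ, 0 < t → deriv lam t < 0)
    (s : ℝ) (hs : 0 < s) :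
    let K : ℝ → ℝ → ℝ := fun t σ => s ^ (m + 2) * σ ^ m *
      ∫ y in Set.Ioc (0 : ℝ) (min t σ), lam (t * s) * lam (σ * s) / (lam (y * s)) ^ 2
    ∀ t : ℝ, 0 < t →
      (∫ σ in Set.Ioi (0 : ℝ), K t σ) = 1 - lam (t * s) ∧
      (∫ σ in Set.Ioi (0 : ℝ), K t σ) ≤ 1 :=
  stmt7_general m lam hC2 hode h0 hlim hpos s hs
end

section
/- Let l ∈ ℕ, γ ∈ ℝ, and ψ ∈ H^γ(ℝⁿ). Let λ be the decaying solution of λ'' = t^{2l−1} λ with λ(0)=1, λ(+∞)=0, satisfying λ(t) + |λ'(t)| ≤ C_M (1+t)^{-M} for all M. Define w by its Fourier transform ŵ(t,ξ) = λ(−t |ξ|^{2/(2l+1)}) ψ̂(ξ) for t ≤ 0. Then for every t ≤ 0, ‖w(t,·)‖_{H^γ(ℝⁿ)} ≤ C ‖ψ‖_{H^γ(ℝⁿ)} and ‖∂_t w(t,·)‖_{H^{γ − 2/(2l+1)}(ℝⁿ)} ≤ C ‖ψ‖_{H^γ(ℝⁿ)}, with C independent of t and ψ. -/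
open MeasureTheory Real FourierTransform Filter Bornology Set

/-
The multipliers `λ(-t|ξ|^σ)` and `|ξ|^σ λ'(-t|ξ|^σ)`, `σ = 2/(2l+1)`, are bounded uniformly in
`t ≤ 0` and `ξ`: `λ` is continuous with a limit at `+∞`, hence bounded on `[0, ∞)`, and then the
decay estimate with `M = 0` bounds `λ'` there too. The factor `|ξ|^σ` is absorbed by the loss
`(1 + |ξ|²)^(-σ/2)` in the Sobolev weight, so both estimates are pointwise on the Fourier side.
-/

theorem Continuous.isBounded_image_Ici_of_tendsto {E : Type*} [PseudoMetricSpace E] {f : ℝ → E}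
    (hf : Continuous f) {a : E} (h : Tendsto f atTop (nhds a)) (c : ℝ) :
    IsBounded (f '' Ici c) := by
  obtain ⟨s, hs, hbdd⟩ := Metric.exists_isBounded_image_of_tendsto h
  obtain ⟨T, hT⟩ := mem_atTop_sets.mp hs
  have hcover : Ici c ⊆ Icc c T ∪ s := fun t ht =>
    (le_total t T).imp (fun htT => ⟨ht, htT⟩) (hT t)
  refine IsBounded.subset ?_ (image_mono hcover)
  rw [image_union]
  exact ((isCompact_Icc.image hf).isBounded).union hbdd

theorem one_add_sq_rpow_sub_mul_rpow_le {r : ℝ} (hr : 0 ≤ r) {σ : ℝ} (hσ : 0 ≤ σ) (γ : ℝ) :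
    (1 + r ^ 2) ^ ((γ - σ) / 2) * r ^ σ ≤ (1 + r ^ 2) ^ (γ / 2) := by
  have hr_sq : r ^ σ = (r ^ 2) ^ (σ / 2) := by
    rw [← rpow_natCast r 2, ← rpow_mul hr, Nat.cast_ofNat, mul_div_cancel₀ _ two_ne_zero]
  calc (1 + r ^ 2) ^ ((γ - σ) / 2) * r ^ σ
      ≤ (1 + r ^ 2) ^ ((γ - σ) / 2) * (1 + r ^ 2) ^ (σ / 2) := by
        rw [hr_sq]
        gcongr
        linarith
    _ = (1 + r ^ 2) ^ (γ / 2) := by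
        rw [← rpow_add (by positivity)]
        ring_nf

theorem norm_ofReal_mul_ofReal_mul_le {w m v C : ℝ} (z : ℂ) (hv : 0 ≤ v)
    (h : |w * m| ≤ C * v) : ‖(w : ℂ) * (m : ℂ) * z‖ ≤ C * ‖(v : ℂ) * z‖ := by
  simp only [norm_mul, Complex.norm_real, Real.norm_eq_abs, abs_of_nonneg hv, ← abs_mul]
  rw [← mul_assoc]
  exact mul_le_mul_of_nonneg_right h (norm_nonneg z)

theorem stmt16_general (n l : ℕ) (γ : ℝ)
    (lam : ℝ → ℝ)
    (hC2 : ContDiff ℝ 2 lam)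
    (hlim : Filter.Tendsto lam Filter.atTop (nhds 0))
    (hdecay : ∀ M : ℕ, ∃ CM : ℝ, 0 < CM ∧
      ∀ t : ℝ, 0 ≤ t → lam t + |deriv lam t| ≤ CM / (1 + t) ^ M) :
    ∃ C : ℝ, 0 < C ∧
      ∀ ψ : EuclideanSpace ℝ (Fin n) → ℂ,
        eLpNorm (fun ξ : EuclideanSpace ℝ (Fin n) =>
          (((1 + ‖ξ‖ ^ 2) ^ (γ / 2) : ℝ) : ℂ) * 𝓕 ψ ξ) 2 volume < ⊤ →
        ∀ t : ℝ, t ≤ 0 →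
          eLpNorm (fun ξ : EuclideanSpace ℝ (Fin n) =>
              (((1 + ‖ξ‖ ^ 2) ^ (γ / 2) : ℝ) : ℂ) *
                ((lam (-t * ‖ξ‖ ^ ((2 : ℝ) / (2 * (l : ℝ) + 1))) : ℝ) : ℂ) * 𝓕 ψ ξ)
            2 volume ≤
          ENNReal.ofReal C *
            eLpNorm (fun ξ : EuclideanSpace ℝ (Fin n) =>
              (((1 + ‖ξ‖ ^ 2) ^ (γ / 2) : ℝ) : ℂ) * 𝓕 ψ ξ) 2 volume ∧
          eLpNorm (fun ξ : EuclideanSpace ℝ (Fin n) =>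
              (((1 + ‖ξ‖ ^ 2) ^ ((γ - 2 / (2 * (l : ℝ) + 1)) / 2) : ℝ) : ℂ) *
                ((-(‖ξ‖ ^ ((2 : ℝ) / (2 * (l : ℝ) + 1))) *
                    deriv lam (-t * ‖ξ‖ ^ ((2 : ℝ) / (2 * (l : ℝ) + 1))) : ℝ) : ℂ) *
                  𝓕 ψ ξ)
            2 volume ≤
          ENNReal.ofReal C *
            eLpNorm (fun ξ : EuclideanSpace ℝ (Fin n) =>
              (((1 + ‖ξ‖ ^ 2) ^ (γ / 2) : ℝ) : ℂ) * 𝓕 ψ ξ) 2 volume := by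
  obtain ⟨B, hB_pos, hB⟩ :=
    (hC2.continuous.isBounded_image_Ici_of_tendsto hlim 0).exists_pos_norm_le
  have hlam : ∀ s, 0 ≤ s → |lam s| ≤ B := fun s hs => hB _ ⟨s, hs, rfl⟩
  obtain ⟨C₀, hC₀_pos, hC₀⟩ := hdecay 0
  have hderiv : ∀ s, 0 ≤ s → |deriv lam s| ≤ C₀ + B := fun s hs => by
    have h := hC₀ s hs
    rw [pow_zero, div_one] at h
    linarith [neg_abs_le (lam s), hlam s hs]
  refine ⟨C₀ + B, by positivity, fun ψ _ t ht => ?_⟩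
  set σ : ℝ := 2 / (2 * (l : ℝ) + 1)
  have hσ : 0 ≤ σ := by positivity
  have hs : ∀ ξ : EuclideanSpace ℝ (Fin n), 0 ≤ -t * ‖ξ‖ ^ σ := fun ξ =>
    mul_nonneg (by linarith) (by positivity)
  constructor <;>
    refine eLpNorm_le_mul_eLpNorm_of_ae_le_mul (ae_of_all _ fun ξ => ?_) 2 <;>
    refine norm_ofReal_mul_ofReal_mul_le _ (by positivity) ?_
  · rw [abs_mul, abs_of_pos (by positivity), mul_comm]
    gcongr
    linarith [hlam _ (hs ξ)]
  · rw [abs_mul, abs_mul, abs_neg, abs_of_pos (by positivity), abs_of_nonneg (by positivity),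
      ← mul_assoc, mul_comm (C₀ + B)]
    exact mul_le_mul (one_add_sq_rpow_sub_mul_rpow_le (norm_nonneg ξ) hσ γ) (hderiv _ (hs ξ))
      (abs_nonneg _) (by positivity)

theorem stmt16 (n l : ℕ) (hn : 1 ≤ n) (hl : 1 ≤ l) (γ : ℝ)
    (lam : ℝ → ℝ)
    (hC2 : ContDiff ℝ 2 lam)
    (hode : ∀ t : ℝ, 0 ≤ t → deriv (deriv lam) t = t ^ (2 * l - 1) * lam t)
    (h0 : lam 0 = 1)
    (hlim : Filter.Tendsto lam Filter.atTop (nhds 0))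
    (hdecay : ∀ M : ℕ, ∃ CM : ℝ, 0 < CM ∧
      ∀ t : ℝ, 0 ≤ t → lam t + |deriv lam t| ≤ CM / (1 + t) ^ M) :
    ∃ C : ℝ, 0 < C ∧
      ∀ ψ : EuclideanSpace ℝ (Fin n) → ℂ,
        eLpNorm (fun ξ : EuclideanSpace ℝ (Fin n) =>
          (((1 + ‖ξ‖ ^ 2) ^ (γ / 2) : ℝ) : ℂ) * 𝓕 ψ ξ) 2 volume < ⊤ →
        ∀ t : ℝ, t ≤ 0 →
          eLpNorm (fun ξ : EuclideanSpace ℝ (Fin n) =>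
              (((1 + ‖ξ‖ ^ 2) ^ (γ / 2) : ℝ) : ℂ) *
                ((lam (-t * ‖ξ‖ ^ ((2 : ℝ) / (2 * (l : ℝ) + 1))) : ℝ) : ℂ) * 𝓕 ψ ξ)
            2 volume ≤
          ENNReal.ofReal C *
            eLpNorm (fun ξ : EuclideanSpace ℝ (Fin n) =>
              (((1 + ‖ξ‖ ^ 2) ^ (γ / 2) : ℝ) : ℂ) * 𝓕 ψ ξ) 2 volume ∧
          eLpNorm (fun ξ : EuclideanSpace ℝ (Fin n) =>
              (((1 + ‖ξ‖ ^ 2) ^ ((γ - 2 / (2 * (l : ℝ) + 1)) / 2) : ℝ) : ℂ) *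
                ((-(‖ξ‖ ^ ((2 : ℝ) / (2 * (l : ℝ) + 1))) *
                    deriv lam (-t * ‖ξ‖ ^ ((2 : ℝ) / (2 * (l : ℝ) + 1))) : ℝ) : ℂ) *
                  𝓕 ψ ξ)
            2 volume ≤
          ENNReal.ofReal C *
            eLpNorm (fun ξ : EuclideanSpace ℝ (Fin n) =>
              (((1 + ‖ξ‖ ^ 2) ^ (γ / 2) : ℝ) : ℂ) * 𝓕 ψ ξ) 2 volume :=
  stmt16_general n l γ lam hC2 hlim hdecay
end

section
/- Let l ∈ ℕ, and for z ∈ ℂ let Φ(α, γ; z) denote the confluent hypergeometric function. Then there exists C > 0 such that for all t ≥ 0 and ξ ∈ ℝⁿ \ {0}, the symbol V₂(t,|ξ|) = t e^{−z/2} Φ((2l+3)/(2(2l+1)), (2l+3)/(2l+1); z) with z = (4i/(2l+1)) t^{(2l+1)/2} |ξ| satisfies |V₂(t,|ξ|)| ≤ C |ξ|^{−2/(2l+1)}. -/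
/-!
Put `a = (2l+3)/(2(2l+1)) ∈ (1/2, 1]` and `G(y) = e^{-iy/2} Φ(a, 2a; iy)`. Kummer's equation for
`Φ` becomes `y G'' + 2a G' + (y/4) G = 0`, and `u = y^a G` solves `u'' + q u = 0` with
`q = 1/4 + a(1-a)/y²`. Since `q` is nonincreasing and `q ≥ 1/4`, the energy `|u'|² + q|u|²` is
nonincreasing, so `|G(y)| ≲ y^{-a}` for `y ≥ 1`, while the power series bounds `G` on `[0, 1]`.
As `b = 2/(2l+1) ≤ a`, this gives `|G(y)| ≲ y^{-b}` for all `y > 0`, and at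
`y = (4/(2l+1)) t^{(2l+1)/2} |ξ|` the factor `t` cancels exactly against `y^{-b}`.
-/

open Real

/-- The confluent hypergeometric function `Φ(α, γ; z) = ∑_k (α)_k / (γ)_k · z^k / k!`. -/
noncomputable def confluentHypergeom (α γ z : ℂ) : ℂ :=
  ∑' k : ℕ, ((ascPochhammer ℂ k).eval α / (ascPochhammer ℂ k).eval γ) * z ^ k /
    (k.factorial : ℂ)

open Nat

noncomputable def powerSeriesSum (d : ℕ → ℂ) (z : ℂ) : ℂ := ∑' k, d k * z ^ k

def derivCoeff (d : ℕ → ℂ) (k : ℕ) : ℂ := (k + 1) * d (k + 1)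

section FactorialBound

variable {d : ℕ → ℂ} {A : ℝ}

theorem summable_norm_mul_pow_of_norm_le (hd : ∀ k, ‖d k‖ ≤ A / k !) (z : ℂ) :
    Summable fun k => ‖d k * z ^ k‖ := by
  refine (Real.summable_pow_div_factorial ‖z‖ |>.mul_left A).of_nonneg_of_le
    (fun _ => norm_nonneg _) fun k => ?_
  rw [norm_mul, norm_pow]
  exact mul_le_mul_of_nonneg_right (hd k) (by positivity) |>.trans_eq (by ring)

theorem hasSum_powerSeriesSum (hd : ∀ k, ‖d k‖ ≤ A / k !) (z : ℂ) :
    HasSum (fun k => d k * z ^ k) (powerSeriesSum d z) :=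
  (summable_norm_mul_pow_of_norm_le hd z).of_norm.hasSum

theorem norm_powerSeriesSum_le (hd : ∀ k, ‖d k‖ ≤ A / k !) (z : ℂ) :
    ‖powerSeriesSum d z‖ ≤ A * Real.exp ‖z‖ := by
  have hexp := (NormedSpace.expSeries_div_hasSum_exp ‖z‖).mul_left A
  rw [← Real.exp_eq_exp_ℝ] at hexp
  refine (norm_tsum_le_tsum_norm (summable_norm_mul_pow_of_norm_le hd z)).trans ?_
  refine hasSum_le (fun k => ?_) (summable_norm_mul_pow_of_norm_le hd z).hasSum hexp
  rw [norm_mul, norm_pow]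
  exact (mul_le_mul_of_nonneg_right (hd k) (by positivity)).trans_eq (by ring)

theorem norm_derivCoeff_le (hd : ∀ k, ‖d k‖ ≤ A / k !) (k : ℕ) :
    ‖derivCoeff d k‖ ≤ A / k ! := by
  have hk : (k + 1 : ℂ) = ((k + 1 : ℕ) : ℂ) := by push_cast; ring
  rw [derivCoeff, norm_mul, hk, Complex.norm_natCast]
  calc ((k + 1 : ℕ) : ℝ) * ‖d (k + 1)‖ ≤ (k + 1 : ℕ) * (A / (k + 1)!) := by
        gcongr; exact hd _
    _ = A / k ! := by
      rw [factorial_succ, cast_mul]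
      field_simp

theorem hasDerivAt_powerSeriesSum (hd : ∀ k, ‖d k‖ ≤ A / k !) (z : ℂ) :
    HasDerivAt (powerSeriesSum d) (powerSeriesSum (derivCoeff d) z) z := by
  set R := ‖z‖ + 1
  have hR : 1 ≤ R := by simp [R]
  have hA : 0 ≤ A := (norm_nonneg _).trans (by simpa using hd 0)
  have hbound : ∀ k, ∀ w ∈ Metric.ball (0 : ℂ) R,
      ‖d k * (k * w ^ (k - 1))‖ ≤ A * (2 * R) ^ k / k ! := by
    intro k w hw
    have hw : ‖w‖ ≤ R := (mem_ball_zero_iff.mp hw).le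
    have hpow : (k : ℝ) * ‖w‖ ^ (k - 1) ≤ (2 * R) ^ k := by
      rw [mul_pow]
      gcongr
      · exact_mod_cast (Nat.lt_two_pow_self).le
      · exact (pow_le_pow_left₀ (norm_nonneg _) hw _).trans (pow_le_pow_right₀ hR (by omega))
    rw [norm_mul, norm_mul, norm_pow, Complex.norm_natCast]
    calc ‖d k‖ * (k * ‖w‖ ^ (k - 1)) ≤ A / k ! * (2 * R) ^ k := by gcongr; exact hd k
      _ = A * (2 * R) ^ k / k ! := by ring
  have hz : z ∈ Metric.ball (0 : ℂ) R := by simp [R]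
  have hsum := (Real.summable_pow_div_factorial (2 * R)).mul_left A
  simp only [← mul_div_assoc] at hsum
  have hderiv := hasDerivAt_tsum_of_isPreconnected hsum Metric.isOpen_ball
    (convex_ball (0 : ℂ) R).isPreconnected (fun k w _ => (hasDerivAt_pow k w).const_mul (d k))
    hbound (Metric.mem_ball_self (by linarith)) (hasSum_powerSeriesSum hd 0).summable hz
  refine hderiv.congr_deriv ?_
  rw [(Summable.of_norm_bounded hsum fun k => hbound k z hz).tsum_eq_zero_add]
  simp only [powerSeriesSum, derivCoeff, cast_zero, zero_mul, mul_zero, zero_add, cast_succ,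
    add_tsub_cancel_right]
  exact tsum_congr fun k => by ring

theorem hasSum_natCast_mul_mul_pow (hd : ∀ k, ‖d k‖ ≤ A / k !) (z : ℂ) :
    HasSum (fun k => k * d k * z ^ k) (z * powerSeriesSum (derivCoeff d) z) := by
  have h := (hasSum_powerSeriesSum (norm_derivCoeff_le hd) z).mul_left z
  have hterm (k : ℕ) :
      z * (derivCoeff d k * z ^ k) = (k + 1 : ℕ) * d (k + 1) * z ^ (k + 1) := by
    simp only [derivCoeff]
    push_cast
    ring
  simp only [hterm] at h
  exact (hasSum_nat_add_iff' 1).mp (by simpa using h)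

end FactorialBound

theorem monotoneOn_ascPochhammer_eval {S : Type*} [Ring S] [PartialOrder S] [IsStrictOrderedRing S]
    (n : ℕ) : MonotoneOn (ascPochhammer S n).eval (Set.Ici 0) := by
  intro x hx y hy hxy
  have hshift (w : S) (hw : w ∈ Set.Ici 0) : w + n - 1 ∈ Set.Ici (n - 1 : S) := by
    rw [Set.mem_Ici]; gcongr; exact le_add_of_nonneg_left hw
  have hcancel (w : S) : w + n - 1 - n + 1 = w := by abel
  simpa only [descPochhammer_eval_eq_ascPochhammer, hcancel] using
    monotoneOn_descPochhammer_eval n (hshift x hx) (hshift y hy) (by gcongr)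

theorem ofReal_ascPochhammer_eval (n : ℕ) (x : ℝ) :
    (((ascPochhammer ℝ n).eval x : ℝ) : ℂ) = (ascPochhammer ℂ n).eval (x : ℂ) := by
  rw [ascPochhammer_eval₂ (algebraMap ℝ ℂ) n (x : ℂ)]
  exact (Polynomial.eval₂_at_apply (algebraMap ℝ ℂ) x).symm

noncomputable def kummerCoeff (α γ : ℝ) (k : ℕ) : ℂ :=
  ((ascPochhammer ℝ k).eval α / (ascPochhammer ℝ k).eval γ / k ! : ℝ)

theorem confluentHypergeom_ofReal (α γ : ℝ) (z : ℂ) :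
    confluentHypergeom α γ z = powerSeriesSum (kummerCoeff α γ) z := by
  refine tsum_congr fun k => ?_
  simp only [kummerCoeff, Complex.ofReal_div, ofReal_ascPochhammer_eval, Complex.ofReal_natCast]
  ring

section Kummer

variable {α γ : ℝ}

theorem norm_kummerCoeff_le (hα : 0 < α) (hαγ : α ≤ γ) (k : ℕ) :
    ‖kummerCoeff α γ k‖ ≤ 1 / k ! := by
  have hγ := ascPochhammer_pos k γ (hα.trans_le hαγ)
  rw [kummerCoeff, Complex.norm_real,
    Real.norm_of_nonneg (by positivity [ascPochhammer_pos k α hα])]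
  gcongr
  exact div_le_one_of_le₀
    (monotoneOn_ascPochhammer_eval k hα.le (hα.le.trans hαγ) hαγ) hγ.le

theorem add_mul_derivCoeff_kummerCoeff (hγ : 0 < γ) (k : ℕ) :
    (k + γ) * derivCoeff (kummerCoeff α γ) k = (k + α) * kummerCoeff α γ k := by
  have hγk : (((ascPochhammer ℝ k).eval γ : ℝ) : ℂ) ≠ 0 := by
    exact_mod_cast (ascPochhammer_pos k γ hγ).ne'
  have hγk' : (γ : ℂ) + k ≠ 0 := by exact_mod_cast (by positivity : γ + k ≠ 0)
  simp only [derivCoeff, kummerCoeff, ascPochhammer_succ_eval, factorial_succ]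
  push_cast
  field_simp
  ring

theorem kummer_ode (hα : 0 < α) (hαγ : α ≤ γ) (z : ℂ) :
    z * powerSeriesSum (derivCoeff (derivCoeff (kummerCoeff α γ))) z
      + (γ - z) * powerSeriesSum (derivCoeff (kummerCoeff α γ)) z
      - α * powerSeriesSum (kummerCoeff α γ) z = 0 := by
  have hc := norm_kummerCoeff_le hα hαγ
  have h := (((hasSum_natCast_mul_mul_pow (norm_derivCoeff_le hc) z).add
    ((hasSum_powerSeriesSum (norm_derivCoeff_le hc) z).mul_left (γ : ℂ))).sub
    (hasSum_natCast_mul_mul_pow hc z)).sub ((hasSum_powerSeriesSum hc z).mul_left (α : ℂ))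
  refine Eq.trans (by ring) (h.unique ?_)
  convert hasSum_zero with k
  linear_combination z ^ k * add_mul_derivCoeff_kummerCoeff (α := α) (hα.trans_le hαγ) k

end Kummer

section Liouville

variable {E : Type*} [NormedAddCommGroup E] [NormedSpace ℝ E]

/-- The Liouville substitution `u = y^a G` turns `y G'' + 2a G' + (y/4) G = 0` into
`u'' + (1/4 + a(1-a)/y²) u = 0`. -/
theorem hasDerivAt_rpow_smul_deriv {G G' : ℝ → E} {a y : ℝ} (hy : 0 < y)
    (hG : HasDerivAt G (G' y) y)
    (hG' : HasDerivAt G' (-(2 * a / y) • G' y - (1 / 4 : ℝ) • G y) y) :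
    HasDerivAt (fun y => (a * y ^ (a - 1)) • G y + y ^ a • G' y)
      (-(1 / 4 + a * (1 - a) / y ^ 2) • (y ^ a • G y)) y := by
  have hpow (p : ℝ) : HasDerivAt (fun y => y ^ p) (p * y ^ (p - 1)) y :=
    Real.hasDerivAt_rpow_const (Or.inl hy.ne')
  have h := (((hpow (a - 1)).const_mul a).smul hG).add ((hpow a).smul hG')
  refine h.congr_deriv ?_
  have h1 : y ^ (a - 1) = y ^ a * y⁻¹ := by rw [Real.rpow_sub_one hy.ne', div_eq_mul_inv]
  have h2 : y ^ (a - 1 - 1) = y ^ a * y⁻¹ ^ 2 := by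
    rw [Real.rpow_sub_one hy.ne', Real.rpow_sub_one hy.ne']
    ring
  rw [h1, h2]
  module

end Liouville

section Energy

variable {E : Type*} [NormedAddCommGroup E] [InnerProductSpace ℝ E]

theorem antitoneOn_energy {u v : ℝ → E} {q q' : ℝ → ℝ} {s : Set ℝ} (hs : Convex ℝ s)
    (hu : ∀ y ∈ s, HasDerivAt u (v y) y) (hv : ∀ y ∈ s, HasDerivAt v (-q y • u y) y)
    (hq : ∀ y ∈ s, HasDerivAt q (q' y) y) (hq' : ∀ y ∈ s, q' y ≤ 0) :
    AntitoneOn (fun y => ‖v y‖ ^ 2 + q y * ‖u y‖ ^ 2) s := by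
  have hE (y : ℝ) (hy : y ∈ s) :
      HasDerivAt (fun y => ‖v y‖ ^ 2 + q y * ‖u y‖ ^ 2) (q' y * ‖u y‖ ^ 2) y := by
    refine ((hv y hy).norm_sq.add ((hq y hy).mul (hu y hy).norm_sq)).congr_deriv ?_
    rw [inner_smul_right, real_inner_comm]
    ring
  refine antitoneOn_of_hasDerivWithinAt_nonpos hs
    (fun y hy => (hE y hy).continuousAt.continuousWithinAt)
    (fun y hy => (hE y (interior_subset hy)).hasDerivWithinAt)
    (fun y hy => mul_nonpos_of_nonpos_of_nonneg (hq' y (interior_subset hy)) (by positivity))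

end Energy

open Complex

/-- Kummer's second formula identifies this with `Γ(a + 1/2) (y/4)^(1/2 - a) J_{a - 1/2}(y/2)`. -/
noncomputable def kummerBessel (a y : ℝ) : ℂ :=
  exp (-(I * y) / 2) * confluentHypergeom a (2 * a : ℝ) (I * y)

noncomputable def kummerBesselDeriv (a y : ℝ) : ℂ :=
  exp (-(I * y) / 2) * (-(I / 2) * powerSeriesSum (kummerCoeff a (2 * a)) (I * y)
    + I * powerSeriesSum (derivCoeff (kummerCoeff a (2 * a))) (I * y))

theorem hasDerivAt_powerSeriesSum_I_mul {d : ℕ → ℂ} {A : ℝ} (hd : ∀ k, ‖d k‖ ≤ A / k !)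
    (y : ℝ) :
    HasDerivAt (fun y : ℝ => powerSeriesSum d (I * y))
      (I * powerSeriesSum (derivCoeff d) (I * y)) y := by
  have h := (hasDerivAt_powerSeriesSum hd (I * y)).comp (y : ℂ)
    ((hasDerivAt_id (y : ℂ)).const_mul I)
  simpa [mul_comm] using h.comp_ofReal

theorem hasDerivAt_exp_neg_I_mul_div_two (y : ℝ) :
    HasDerivAt (fun y : ℝ => exp (-(I * y) / 2))
      (-(I / 2) * exp (-(I * y) / 2)) y := by
  have h := ((((hasDerivAt_id (y : ℂ)).const_mul I).neg).div_const 2).cexp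
  simpa [mul_comm, neg_div] using h.comp_ofReal

section KummerBessel

variable {a : ℝ}

theorem hasDerivAt_kummerBessel (ha : 0 < a) (y : ℝ) :
    HasDerivAt (kummerBessel a) (kummerBesselDeriv a y) y := by
  have hc := norm_kummerCoeff_le ha (by linarith : a ≤ 2 * a)
  have h := (hasDerivAt_exp_neg_I_mul_div_two y).mul (hasDerivAt_powerSeriesSum_I_mul hc y)
  unfold kummerBessel
  simp only [confluentHypergeom_ofReal]
  exact h.congr_deriv (by rw [kummerBesselDeriv]; ring)

theorem hasDerivAt_kummerBesselDeriv (ha : 0 < a) {y : ℝ} (hy : 0 < y) :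
    HasDerivAt (kummerBesselDeriv a)
      (-(2 * a / y) • kummerBesselDeriv a y - (1 / 4 : ℝ) • kummerBessel a y) y := by
  have hc := norm_kummerCoeff_le ha (by linarith : a ≤ 2 * a)
  have hc' := norm_derivCoeff_le hc
  have h := (hasDerivAt_exp_neg_I_mul_div_two y).mul
    (((hasDerivAt_powerSeriesSum_I_mul hc y).const_mul (-(I / 2))).add
      ((hasDerivAt_powerSeriesSum_I_mul hc' y).const_mul I))
  refine h.congr_deriv ?_
  have hode := kummer_ode ha (by linarith : a ≤ 2 * a) (I * y)
  have hy' : (y : ℂ) ≠ 0 := ofReal_ne_zero.mpr hy.ne'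
  simp only [kummerBessel, kummerBesselDeriv, confluentHypergeom_ofReal, real_smul, Pi.add_apply]
  set e := exp (-(I * y) / 2)
  set P := powerSeriesSum (kummerCoeff a (2 * a)) (I * y)
  linear_combination (norm := skip) e * I / y * hode + e * P / 4 * I_sq
  push_cast
  field_simp
  ring

theorem norm_kummerBessel_le_exp (ha : 0 < a) (y : ℝ) :
    ‖kummerBessel a y‖ ≤ Real.exp |y| := by
  have hexp : ‖exp (-(I * y) / 2)‖ = 1 := by
    rw [show -(I * y) / 2 = ((-y / 2 : ℝ) : ℂ) * I by push_cast; ring, norm_exp_ofReal_mul_I]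
  rw [kummerBessel, norm_mul, hexp, one_mul, confluentHypergeom_ofReal]
  simpa using norm_powerSeriesSum_le (norm_kummerCoeff_le ha (by linarith : a ≤ 2 * a)) (I * y)

theorem exists_norm_kummerBessel_le_rpow_neg (ha : 0 < a) (ha1 : a ≤ 1) :
    ∃ K, ∀ y, 1 ≤ y → ‖kummerBessel a y‖ ≤ K * y ^ (-a) := by
  set q : ℝ → ℝ := fun y => 1 / 4 + a * (1 - a) / y ^ 2
  set u : ℝ → ℂ := fun y => y ^ a • kummerBessel a y
  set v : ℝ → ℂ := fun y =>
    (a * y ^ (a - 1)) • kummerBessel a y + y ^ a • kummerBesselDeriv a y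
  have ha' : 0 ≤ a * (1 - a) := mul_nonneg ha.le (by linarith)
  have hu (y : ℝ) (hy : 0 < y) : HasDerivAt u (v y) y :=
    ((Real.hasDerivAt_rpow_const (Or.inl hy.ne')).smul
      (hasDerivAt_kummerBessel ha y)).congr_deriv (add_comm _ _)
  have hv (y : ℝ) (hy : 0 < y) : HasDerivAt v (-q y • u y) y :=
    hasDerivAt_rpow_smul_deriv hy (hasDerivAt_kummerBessel ha y)
      (hasDerivAt_kummerBesselDeriv ha hy)
  have hq (y : ℝ) (hy : 0 < y) : HasDerivAt q (-(2 * a * (1 - a)) / y ^ 3) y := by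
    refine ((((hasDerivAt_pow 2 y).inv (by positivity)).const_mul (a * (1 - a))).const_add
      (1 / 4)).congr_deriv ?_
    field_simp
    ring
  have hpos (y : ℝ) (hy : y ∈ Set.Ici 1) : 0 < y := one_pos.trans_le hy
  have henergy := antitoneOn_energy (convex_Ici 1) (fun y hy => hu y (hpos y hy))
    (fun y hy => hv y (hpos y hy)) (fun y hy => hq y (hpos y hy))
    (fun y hy => div_nonpos_of_nonpos_of_nonneg (by linarith) (pow_nonneg (hpos y hy).le 3))
  refine ⟨2 * √(‖v 1‖ ^ 2 + q 1 * ‖u 1‖ ^ 2), fun y hy => ?_⟩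
  have hy0 := hpos y hy
  have hq_ge : 1 / 4 ≤ q y := le_add_of_nonneg_right (by positivity)
  have hu_le : ‖u y‖ ^ 2 ≤ 2 ^ 2 * (‖v 1‖ ^ 2 + q 1 * ‖u 1‖ ^ 2) := by
    have := henergy (Set.mem_Ici.mpr le_rfl) hy hy
    nlinarith [sq_nonneg ‖v y‖, sq_nonneg ‖u y‖]
  have hnorm_u : ‖u y‖ = y ^ a * ‖kummerBessel a y‖ := by
    rw [norm_smul, Real.norm_of_nonneg (by positivity)]
  rw [Real.rpow_neg hy0.le, ← div_eq_mul_inv, le_div_iff₀ (by positivity), mul_comm,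
    ← hnorm_u, ← Real.sqrt_sq (norm_nonneg (u y)),
    ← Real.sqrt_sq (by norm_num : (0 : ℝ) ≤ 2), ← Real.sqrt_mul (by norm_num)]
  gcongr

theorem exists_norm_kummerBessel_le_rpow_neg_of_le {b : ℝ} (ha : 0 < a) (ha1 : a ≤ 1)
    (hb : 0 ≤ b) (hba : b ≤ a) :
    ∃ C, 0 < C ∧ ∀ y, 0 < y → ‖kummerBessel a y‖ ≤ C * y ^ (-b) := by
  obtain ⟨K, hK⟩ := exists_norm_kummerBessel_le_rpow_neg ha ha1
  refine ⟨max (Real.exp 1) K, lt_max_of_lt_left (Real.exp_pos 1), fun y hy => ?_⟩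
  rcases le_total y 1 with hy1 | hy1
  · calc ‖kummerBessel a y‖ ≤ Real.exp |y| := norm_kummerBessel_le_exp ha y
      _ ≤ Real.exp 1 * 1 := by rw [mul_one, abs_of_pos hy]; gcongr
      _ ≤ max (Real.exp 1) K * y ^ (-b) := by
        gcongr
        · exact le_max_left _ _
        · exact Real.one_le_rpow_of_pos_of_le_one_of_nonpos hy hy1 (by linarith)
  · calc ‖kummerBessel a y‖ ≤ K * y ^ (-a) := hK y hy1
      _ ≤ max (Real.exp 1) K * y ^ (-b) := by
        have hK0 : 0 ≤ K := nonneg_of_mul_nonneg_left ((norm_nonneg _).trans (hK 1 le_rfl))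
          (by simp)
        gcongr
        exact le_max_right _ _

end KummerBessel

theorem mul_rpow_neg_of_mul_eq_one {t β r m b : ℝ} (ht : 0 < t) (hβ : 0 ≤ β) (hr : 0 ≤ r)
    (hmb : m * b = 1) : t * (β * (t ^ m * r)) ^ (-b) = β ^ (-b) * r ^ (-b) := by
  rw [Real.mul_rpow hβ (by positivity), Real.mul_rpow (by positivity) hr, ← Real.rpow_mul ht.le,
    show m * -b = -1 by linarith, Real.rpow_neg_one]
  field_simp

theorem exp_mul_confluentHypergeom_eq_kummerBessel (l : ℕ) (x : ℝ) :
    exp (-(4 * I / (2 * (l : ℂ) + 1) * x) / 2) *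
        confluentHypergeom ((2 * (l : ℂ) + 3) / (2 * (2 * (l : ℂ) + 1)))
          ((2 * (l : ℂ) + 3) / (2 * (l : ℂ) + 1)) (4 * I / (2 * (l : ℂ) + 1) * x) =
      kummerBessel ((2 * l + 3) / (2 * (2 * l + 1))) (4 / (2 * l + 1) * x) := by
  have hl : (2 * (l : ℂ) + 1) ≠ 0 := by exact_mod_cast (by positivity : 2 * (l : ℝ) + 1 ≠ 0)
  have hz : 4 * I / (2 * (l : ℂ) + 1) * x = I * ((4 / (2 * l + 1) * x : ℝ) : ℂ) := by
    push_cast; ring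
  rw [kummerBessel, hz]
  congr 3 <;> push_cast <;> field_simp

theorem stmt18_general (n l : ℕ) (hl : 1 ≤ l) :
    ∃ C : ℝ, 0 < C ∧
      ∀ t : ℝ, 0 ≤ t → ∀ ξ : EuclideanSpace ℝ (Fin n), ξ ≠ 0 →
        ‖(t : ℂ) *
            Complex.exp (-(4 * Complex.I / (2 * (l : ℂ) + 1) *
              ((t ^ ((2 * (l : ℝ) + 1) / 2) * ‖ξ‖ : ℝ) : ℂ)) / 2) *
            confluentHypergeom ((2 * (l : ℂ) + 3) / (2 * (2 * (l : ℂ) + 1)))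
              ((2 * (l : ℂ) + 3) / (2 * (l : ℂ) + 1))
              (4 * Complex.I / (2 * (l : ℂ) + 1) *
                ((t ^ ((2 * (l : ℝ) + 1) / 2) * ‖ξ‖ : ℝ) : ℂ))‖ ≤
          C * ‖ξ‖ ^ (-(2 : ℝ) / (2 * (l : ℝ) + 1)) := by
  have hl' : (1 : ℝ) ≤ l := by exact_mod_cast hl
  set a : ℝ := (2 * l + 3) / (2 * (2 * l + 1))
  set b : ℝ := 2 / (2 * l + 1)
  set β : ℝ := 4 / (2 * l + 1)
  obtain ⟨C, hC, hbound⟩ := exists_norm_kummerBessel_le_rpow_neg_of_le (a := a) (b := b)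
    (by positivity) (by rw [div_le_one (by positivity)]; linarith) (by positivity)
    (by rw [div_le_div_iff₀ (by positivity) (by positivity)]; nlinarith)
  refine ⟨C * β ^ (-b), by positivity, fun t ht ξ hξ => ?_⟩
  have hξ : 0 < ‖ξ‖ := norm_pos_iff.mpr hξ
  rcases ht.eq_or_lt with rfl | ht
  · simp only [Complex.ofReal_zero, zero_mul, norm_zero]
    positivity
  rw [mul_assoc, exp_mul_confluentHypergeom_eq_kummerBessel, norm_mul, Complex.norm_real,
    Real.norm_of_nonneg ht.le, neg_div]
  calc t * ‖kummerBessel a (β * (t ^ ((2 * (l : ℝ) + 1) / 2) * ‖ξ‖))‖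
      ≤ t * (C * (β * (t ^ ((2 * (l : ℝ) + 1) / 2) * ‖ξ‖)) ^ (-b)) := by
        gcongr; exact hbound _ (by positivity)
    _ = C * β ^ (-b) * ‖ξ‖ ^ (-b) := by
        rw [mul_left_comm, mul_rpow_neg_of_mul_eq_one ht (by positivity) hξ.le
          (by simp only [b]; field_simp), mul_assoc]

theorem stmt18 (n l : ℕ) (hn : 1 ≤ n) (hl : 1 ≤ l) :
    ∃ C : ℝ, 0 < C ∧
      ∀ t : ℝ, 0 ≤ t → ∀ ξ : EuclideanSpace ℝ (Fin n), ξ ≠ 0 →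
        ‖(t : ℂ) *
            Complex.exp (-(4 * Complex.I / (2 * (l : ℂ) + 1) *
              ((t ^ ((2 * (l : ℝ) + 1) / 2) * ‖ξ‖ : ℝ) : ℂ)) / 2) *
            confluentHypergeom ((2 * (l : ℂ) + 3) / (2 * (2 * (l : ℂ) + 1)))
              ((2 * (l : ℂ) + 3) / (2 * (l : ℂ) + 1))
              (4 * Complex.I / (2 * (l : ℂ) + 1) *
                ((t ^ ((2 * (l : ℝ) + 1) / 2) * ‖ξ‖ : ℝ) : ℂ))‖ ≤
          C * ‖ξ‖ ^ (-(2 : ℝ) / (2 * (l : ℝ) + 1)) :=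
  stmt18_general n l hl
end
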